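/- arXiv:2601.08927 — 13 statements merged into one kernel-verified Lean document; each statement's English description precedes it below -/
import Mathlib

section
/- Let g ≥ 2. With the local x-coordinates x_0,…,x_g defined by the recursion x_{m+1} = x_m + a(i_{m+1}, j_{m+1}, k̄_m) − a(i_m, j_m, k̄_m) in ZMod p (with x_0 ∈ ZMod p arbitrary), and the local y-coordinates y_0,…,y_g defined analogously from the shift function b, the closing conditions x_g = x_0 and y_g = y_0 hold simultaneously if and only if Σ_{m=0}^{g−1} ( a(i_m, j_m, k̄_m) − a(i_{m+1}, j_{m+1}, k̄_m) ) = 0 in ZMod p and Σ_{m=0}^{g−1} ( b(i_m, j_m, k̄_m) − b(i_{m+1}, j_{m+1}, k̄_m) ) = 0 in ZMod p, where indices are read with (i_g, j_g) = (i_0, j_0). -/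
open Finset

theorem apply_sub_apply_zero_eq_neg_sum_sub {G : Type*} [AddCommGroup G] {n : ℕ}
    {x : ℕ → G} (u v : ℕ → G) (hx : ∀ m < n, x (m + 1) = x m + v m - u m) :
    x n - x 0 = -∑ m ∈ range n, (u m - v m) := by
  rw [← sum_range_sub, ← sum_neg_distrib]
  refine sum_congr rfl fun m hm => ?_
  rw [hx m (mem_range.mp hm)]
  abel

theorem apply_eq_apply_zero_iff_sum_sub_eq_zero {G : Type*} [AddCommGroup G] {n : ℕ}
    {x : ℕ → G} (u v : ℕ → G) (hx : ∀ m < n, x (m + 1) = x m + v m - u m) :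
    x n = x 0 ↔ ∑ m ∈ range n, (u m - v m) = 0 := by
  rw [← sub_eq_zero, apply_sub_apply_zero_eq_neg_sum_sub u v hx, neg_eq_zero]

theorem stmt_2_general (p : ℕ) {ι κ : Type*} (g : ℕ)
    (a b : ι → ι → κ → ZMod p)
    (i j : ℕ → ι) (kbar : ℕ → κ)
    (x y : ℕ → ZMod p)
    (hx : ∀ m < g, x (m + 1) =
      x m + a (i (m + 1)) (j (m + 1)) (kbar m) - a (i m) (j m) (kbar m))
    (hy : ∀ m < g, y (m + 1) =
      y m + b (i (m + 1)) (j (m + 1)) (kbar m) - b (i m) (j m) (kbar m)) :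
    (x g = x 0 ∧ y g = y 0) ↔
      ((∑ m ∈ Finset.range g,
          (a (i m) (j m) (kbar m) - a (i (m + 1)) (j (m + 1)) (kbar m)) = 0) ∧
       (∑ m ∈ Finset.range g,
          (b (i m) (j m) (kbar m) - b (i (m + 1)) (j (m + 1)) (kbar m)) = 0)) :=
  and_congr (apply_eq_apply_zero_iff_sum_sub_eq_zero _ _ hx)
    (apply_eq_apply_zero_iff_sum_sub_eq_zero _ _ hy)

/-- Theorem 1 (general condition for a `2g`-cycle): tracing a closed path of length `2g`
through the stacked permutation tensors, the local `x`- and `y`-coordinates obey the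
stated recursions, and the path closes (`x_g = x_0` and `y_g = y_0`) if and only if the
two alternating shift sums vanish modulo `p`. -/
theorem stmt_2 (p : ℕ) (hp : 2 < p) {ι κ : Type*} (g : ℕ) (hg : 2 ≤ g)
    (a b : ι → ι → κ → ZMod p)
    (i j : ℕ → ι) (kbar : ℕ → κ)
    (hclose : i g = i 0 ∧ j g = j 0)
    (x y : ℕ → ZMod p)
    (hx : ∀ m < g, x (m + 1) =
      x m + a (i (m + 1)) (j (m + 1)) (kbar m) - a (i m) (j m) (kbar m))
    (hy : ∀ m < g, y (m + 1) =
      y m + b (i (m + 1)) (j (m + 1)) (kbar m) - b (i m) (j m) (kbar m)) :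
    (x g = x 0 ∧ y g = y 0) ↔
      ((∑ m ∈ Finset.range g,
          (a (i m) (j m) (kbar m) - a (i (m + 1)) (j (m + 1)) (kbar m)) = 0) ∧
       (∑ m ∈ Finset.range g,
          (b (i m) (j m) (kbar m) - b (i (m + 1)) (j (m + 1)) (kbar m)) = 0)) :=
  stmt_2_general p g a b i j kbar x y hx hy
end

section
/- Let p be a prime, let φ, ψ : ZMod p → ZMod p be bijections, let α ∈ ZMod p with α ≠ 0, and let i₀, i₁, j₀, j₁ ∈ ZMod p with (i₀, j₀) ≠ (i₁, j₁). Then it is not the case that both α·((φ(i₀) − φ(i₁)) + (ψ(j₀) − ψ(j₁))) = 0 and α·(φ(i₀) − φ(i₁)) = 0 hold in ZMod p. -/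
theorem eq_zero_and_eq_zero_of_mul_add_eq_zero {R : Type*} [NonUnitalNonAssocSemiring R]
    [NoZeroDivisors R] {α a b : R} (hα : α ≠ 0) (hab : α * (a + b) = 0) (ha : α * a = 0) :
    a = 0 ∧ b = 0 := by
  have ha' : a = 0 := (mul_eq_zero.mp ha).resolve_left hα
  rw [ha', zero_add] at hab
  exact ⟨ha', (mul_eq_zero.mp hab).resolve_left hα⟩

/-- The arithmetic core of Lemma 3: for a prime `p`, bijections `φ, ψ` on `ZMod p`,
a nonzero `α` and distinct block-column indices `(i₀, j₀) ≠ (i₁, j₁)`, the two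
4-cycle equations cannot hold simultaneously. -/
theorem stmt_3 (p : ℕ) [Fact p.Prime] (φ ψ : ZMod p → ZMod p)
    (hφ : Function.Bijective φ) (hψ : Function.Bijective ψ)
    (α : ZMod p) (hα : α ≠ 0)
    (i₀ i₁ j₀ j₁ : ZMod p) (hij : (i₀, j₀) ≠ (i₁, j₁)) :
    ¬ (α * ((φ i₀ - φ i₁) + (ψ j₀ - ψ j₁)) = 0 ∧ α * (φ i₀ - φ i₁) = 0) := by
  rintro ⟨hsum, hφdiff⟩
  obtain ⟨hi, hj⟩ := eq_zero_and_eq_zero_of_mul_add_eq_zero hα hsum hφdiff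
  exact hij (Prod.ext (hφ.injective (sub_eq_zero.mp hi)) (hψ.injective (sub_eq_zero.mp hj)))
end

section
/- For the binary matrix H described in the context (p an odd prime, 1 ≤ w ≤ p), any two distinct rows ℓ₁ ≠ ℓ₂ have at most one column position (x,y) at which both rows equal 1. Equivalently, the Tanner graph of H contains no cycle of length 4. -/
open Matrix

/-- The layer-by-layer unfolding of the 2-D QC-LDPC parity-check tensor: a binary matrix
with rows indexed by layers `ℓ ∈ {0,…,w·p²−1}` and columns indexed by positions
`(x, y)` with `x, y ∈ {0,…,p²−1}`; entry `(ℓ, (x, y))` equals `1` iff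
`x ≡ ℓ + ζ_{⌊ℓ/p²⌋}(⌊ℓ/p⌋) + ⌊ℓ/p²⌋·(φ(⌊x/p⌋) + ψ(⌊y/p⌋)) (mod p)` and
`y ≡ ℓ + ⌊ℓ/p²⌋·φ(⌊x/p⌋) (mod p)`. -/
def Hmat (p w : ℕ) (φ ψ : ZMod p → ZMod p) (ζ : ℕ → ZMod p → ZMod p) :
    Matrix (Fin (w * p ^ 2)) (Fin (p ^ 2) × Fin (p ^ 2)) (ZMod 2) :=
  fun ℓ xy =>
    if (((xy.1 : ℕ) : ZMod p) =
          ((ℓ : ℕ) : ZMod p) + ζ ((ℓ : ℕ) / p ^ 2) (((ℓ : ℕ) / p : ℕ) : ZMod p) +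
            (((ℓ : ℕ) / p ^ 2 : ℕ) : ZMod p) *
              (φ (((xy.1 : ℕ) / p : ℕ) : ZMod p) + ψ (((xy.2 : ℕ) / p : ℕ) : ZMod p)) ∧
        ((xy.2 : ℕ) : ZMod p) =
          ((ℓ : ℕ) : ZMod p) +
            (((ℓ : ℕ) / p ^ 2 : ℕ) : ZMod p) * φ (((xy.1 : ℕ) / p : ℕ) : ZMod p))
    then 1 else 0

lemma hmat_cond {p w : ℕ} {φ ψ : ZMod p → ZMod p} {ζ : ℕ → ZMod p → ZMod p}
    {ℓ : Fin (w * p ^ 2)} {xy : Fin (p ^ 2) × Fin (p ^ 2)}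
    (h : Hmat p w φ ψ ζ ℓ xy = 1) :
    ((xy.1 : ℕ) : ZMod p) =
          ((ℓ : ℕ) : ZMod p) + ζ ((ℓ : ℕ) / p ^ 2) (((ℓ : ℕ) / p : ℕ) : ZMod p) +
            (((ℓ : ℕ) / p ^ 2 : ℕ) : ZMod p) *
              (φ (((xy.1 : ℕ) / p : ℕ) : ZMod p) + ψ (((xy.2 : ℕ) / p : ℕ) : ZMod p)) ∧
        ((xy.2 : ℕ) : ZMod p) =
          ((ℓ : ℕ) : ZMod p) +
            (((ℓ : ℕ) / p ^ 2 : ℕ) : ZMod p) * φ (((xy.1 : ℕ) / p : ℕ) : ZMod p) := by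
  unfold Hmat at h
  split_ifs at h with hc
  · exact hc
  · exact absurd h (by decide)

lemma castinj {p : ℕ} {a b : ℕ} (ha : a < p) (hb : b < p)
    (h : (a : ZMod p) = b) : a = b := by
  have := (ZMod.natCast_eq_natCast_iff' a b p).mp h
  rwa [Nat.mod_eq_of_lt ha, Nat.mod_eq_of_lt hb] at this


/-- Lemma 3: any two distinct rows of `H` share at most one column position at which
both equal `1`; equivalently, the Tanner graph of `H` has no 4-cycles. -/
theorem stmt_4 (p w : ℕ) (hp : p.Prime) (hodd : Odd p) (hw1 : 1 ≤ w) (hwp : w ≤ p)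
    (φ ψ : ZMod p → ZMod p) (hφ : Function.Bijective φ) (hψ : Function.Bijective ψ)
    (ζ : ℕ → ZMod p → ZMod p) (hζ : ∀ m < w, Function.Bijective (ζ m))
    (ℓ₁ ℓ₂ : Fin (w * p ^ 2)) (hne : ℓ₁ ≠ ℓ₂) :
    (Finset.univ.filter (fun xy : Fin (p ^ 2) × Fin (p ^ 2) =>
        Hmat p w φ ψ ζ ℓ₁ xy = 1 ∧ Hmat p w φ ψ ζ ℓ₂ xy = 1)).card ≤ 1 := by
  haveI := Fact.mk hp
  have hp0 : 0 < p := hp.pos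
  have hp2 : 0 < p ^ 2 := by positivity
  have hm1w : (ℓ₁ : ℕ) / p ^ 2 < w := Nat.div_lt_of_lt_mul (mul_comm w (p ^ 2) ▸ ℓ₁.isLt)
  have hm2w : (ℓ₂ : ℕ) / p ^ 2 < w := Nat.div_lt_of_lt_mul (mul_comm w (p ^ 2) ▸ ℓ₂.isLt)
  rw [Finset.card_le_one]
  rintro ⟨x, y⟩ ha ⟨x', y'⟩ hb
  simp only [Finset.mem_filter, Finset.mem_univ, true_and] at ha hb
  obtain ⟨ha1x, ha1y⟩ := hmat_cond ha.1
  obtain ⟨ha2x, ha2y⟩ := hmat_cond ha.2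
  obtain ⟨hb1x, hb1y⟩ := hmat_cond hb.1
  obtain ⟨hb2x, hb2y⟩ := hmat_cond hb.2
  simp only at ha1x ha1y ha2x ha2y hb1x hb1y hb2x hb2y
  by_cases hm : (ℓ₁ : ℕ) / p ^ 2 = (ℓ₂ : ℕ) / p ^ 2
  · -- same block: derive ℓ₁ = ℓ₂, contradiction
    exfalso
    rw [hm] at ha1x ha1y
    have hℓ : (((ℓ₁ : ℕ) : ZMod p)) = ((ℓ₂ : ℕ) : ZMod p) := by
      linear_combination ha2y - ha1y
    have hζeq : ζ ((ℓ₂ : ℕ) / p ^ 2) (((ℓ₁ : ℕ) / p : ℕ) : ZMod p)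
        = ζ ((ℓ₂ : ℕ) / p ^ 2) (((ℓ₂ : ℕ) / p : ℕ) : ZMod p) := by
      linear_combination ha2x - ha1x - hℓ
    have hq : (((ℓ₁ : ℕ) / p : ℕ) : ZMod p) = (((ℓ₂ : ℕ) / p : ℕ) : ZMod p) :=
      (hζ _ hm2w).injective hζeq
    have hqm : ((ℓ₁ : ℕ) / p) % p = ((ℓ₂ : ℕ) / p) % p := by
      have := (ZMod.natCast_eq_natCast_iff' _ _ p).mp hq
      exact this
    have hℓm : (ℓ₁ : ℕ) % p = (ℓ₂ : ℕ) % p :=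
      (ZMod.natCast_eq_natCast_iff' _ _ p).mp hℓ
    have hdd : ((ℓ₁ : ℕ) / p) / p = ((ℓ₂ : ℕ) / p) / p := by
      rw [Nat.div_div_eq_div_mul, Nat.div_div_eq_div_mul, ← pow_two, hm]
    have hqeq : (ℓ₁ : ℕ) / p = (ℓ₂ : ℕ) / p := by
      rw [← Nat.div_add_mod ((ℓ₁ : ℕ) / p) p, ← Nat.div_add_mod ((ℓ₂ : ℕ) / p) p, hdd, hqm]
    have : (ℓ₁ : ℕ) = (ℓ₂ : ℕ) := by
      rw [← Nat.div_add_mod (ℓ₁ : ℕ) p, ← Nat.div_add_mod (ℓ₂ : ℕ) p, hqeq, hℓm]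
    exact hne (Fin.ext this)
  · -- different blocks
    have hMne : (((ℓ₁ : ℕ) / p ^ 2 : ℕ) : ZMod p) - (((ℓ₂ : ℕ) / p ^ 2 : ℕ) : ZMod p) ≠ 0 := by
      refine sub_ne_zero.mpr (fun h => hm ?_)
      exact castinj (lt_of_lt_of_le hm1w hwp) (lt_of_lt_of_le hm2w hwp) h
    have key1 : ((((ℓ₁ : ℕ) / p ^ 2 : ℕ) : ZMod p) - (((ℓ₂ : ℕ) / p ^ 2 : ℕ) : ZMod p)) *
        (φ (((x : ℕ) / p : ℕ) : ZMod p) - φ (((x' : ℕ) / p : ℕ) : ZMod p)) = 0 := by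
      linear_combination hb1y - hb2y - ha1y + ha2y
    have hφeq : φ (((x : ℕ) / p : ℕ) : ZMod p) = φ (((x' : ℕ) / p : ℕ) : ZMod p) := by
      rcases mul_eq_zero.mp key1 with h | h
      · exact absurd h hMne
      · exact sub_eq_zero.mp h
    have hX : (((x : ℕ) / p : ℕ) : ZMod p) = (((x' : ℕ) / p : ℕ) : ZMod p) :=
      hφ.injective hφeq
    rw [← hX] at hb1x hb2x hb1y hb2y
    have key2 : ((((ℓ₁ : ℕ) / p ^ 2 : ℕ) : ZMod p) - (((ℓ₂ : ℕ) / p ^ 2 : ℕ) : ZMod p)) *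
        (ψ (((y : ℕ) / p : ℕ) : ZMod p) - ψ (((y' : ℕ) / p : ℕ) : ZMod p)) = 0 := by
      linear_combination hb1x - hb2x - ha1x + ha2x
    have hψeq : ψ (((y : ℕ) / p : ℕ) : ZMod p) = ψ (((y' : ℕ) / p : ℕ) : ZMod p) := by
      rcases mul_eq_zero.mp key2 with h | h
      · exact absurd h hMne
      · exact sub_eq_zero.mp h
    have hY : (((y : ℕ) / p : ℕ) : ZMod p) = (((y' : ℕ) / p : ℕ) : ZMod p) :=
      hψ.injective hψeq
    rw [← hY] at hb1x
    -- now x ≡ x' and y ≡ y' mod p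
    have hxc : ((x : ℕ) : ZMod p) = ((x' : ℕ) : ZMod p) := by
      linear_combination ha1x - hb1x
    have hyc : ((y : ℕ) : ZMod p) = ((y' : ℕ) : ZMod p) := by
      linear_combination ha1y - hb1y
    have hxp : (x : ℕ) < p * p := lt_of_lt_of_eq x.isLt (pow_two p)
    have hxp' : (x' : ℕ) < p * p := lt_of_lt_of_eq x'.isLt (pow_two p)
    have hyp : (y : ℕ) < p * p := lt_of_lt_of_eq y.isLt (pow_two p)
    have hyp' : (y' : ℕ) < p * p := lt_of_lt_of_eq y'.isLt (pow_two p)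
    have hXd : (x : ℕ) / p = (x' : ℕ) / p :=
      castinj ((Nat.div_lt_iff_lt_mul hp0).mpr hxp) ((Nat.div_lt_iff_lt_mul hp0).mpr hxp') hX
    have hYd : (y : ℕ) / p = (y' : ℕ) / p :=
      castinj ((Nat.div_lt_iff_lt_mul hp0).mpr hyp) ((Nat.div_lt_iff_lt_mul hp0).mpr hyp') hY
    have hxm : (x : ℕ) % p = (x' : ℕ) % p := (ZMod.natCast_eq_natCast_iff' _ _ p).mp hxc
    have hym : (y : ℕ) % p = (y' : ℕ) % p := (ZMod.natCast_eq_natCast_iff' _ _ p).mp hyc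
    have hxe : (x : ℕ) = (x' : ℕ) := by
      rw [← Nat.div_add_mod (x : ℕ) p, ← Nat.div_add_mod (x' : ℕ) p, hXd, hxm]
    have hye : (y : ℕ) = (y' : ℕ) := by
      rw [← Nat.div_add_mod (y : ℕ) p, ← Nat.div_add_mod (y' : ℕ) p, hYd, hym]
    exact Prod.ext (Fin.ext hxe) (Fin.ext hye)
end

section
/- For the binary matrix H described in the context (p an odd prime, 1 ≤ w ≤ p), let ⟨ℓ₁, ℓ₂⟩ denote the number of column positions (x,y), x,y ∈ {0,…,p²−1}, at which both rows ℓ₁ and ℓ₂ equal 1. Then ⟨ℓ₁, ℓ₂⟩ = p² if ℓ₁ = ℓ₂; ⟨ℓ₁, ℓ₂⟩ = 1 if ℓ₁ ≠ ℓ₂ and ⌊ℓ₁/p²⌋ ≠ ⌊ℓ₂/p²⌋ (the layers lie in different horizontal block-layers); and ⟨ℓ₁, ℓ₂⟩ = 0 if ℓ₁ ≠ ℓ₂ and ⌊ℓ₁/p²⌋ = ⌊ℓ₂/p²⌋ (the layers lie in the same horizontal block-layer). -/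
open Matrix

/-!
Split every column coordinate `x < p²` into its two base-`p` digits. Row `ℓ` has exactly one `1` in
each `p × p` block, so two rows meet once in every block where their positions agree. Put
`u = φ X`, `v = ψ Y` and `m = ⌊ℓ/p²⌋`: the positions are affine in `(u, v)` with slope `m`. For
different block-layers `m₁ ≠ m₂` are distinct mod `p` (both are `< w ≤ p`), so agreement is a
nonsingular linear system in `(u, v)`, solved exactly once. Within one block-layer agreement
forces `ℓ₁ ≡ ℓ₂` and `ζ_m ⌊ℓ₁/p⌋ = ζ_m ⌊ℓ₂/p⌋`, hence all base-`p` digits of `ℓ₁, ℓ₂` agree.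
-/

theorem eq_of_div_sq_eq_of_natCast_eq {p n₁ n₂ : ℕ} (hhigh : n₁ / p ^ 2 = n₂ / p ^ 2)
    (hmid : ((n₁ / p : ℕ) : ZMod p) = (n₂ / p : ℕ)) (hlow : (n₁ : ZMod p) = n₂) : n₁ = n₂ := by
  rw [ZMod.natCast_eq_natCast_iff'] at hmid hlow
  rw [sq, ← Nat.div_div_eq_div_mul, ← Nat.div_div_eq_div_mul] at hhigh
  have hdiv : n₁ / p = n₂ / p := by
    rw [← Nat.div_add_mod (n₁ / p) p, ← Nat.div_add_mod (n₂ / p) p, hhigh, hmid]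
  rw [← Nat.div_add_mod n₁ p, ← Nat.div_add_mod n₂ p, hdiv, hlow]

section Digits

variable (p : ℕ) [NeZero p]

noncomputable def digitsEquiv : Fin (p ^ 2) ≃ ZMod p × ZMod p :=
  Equiv.ofBijective (fun x => ((((x : ℕ) / p : ℕ) : ZMod p), ((x : ℕ) : ZMod p))) <| by
    refine (Fintype.bijective_iff_injective_and_card _).mpr ⟨fun x y hxy => ?_, by simp [sq]⟩
    obtain ⟨hmid, hlow⟩ := Prod.mk.inj hxy
    refine Fin.ext (eq_of_div_sq_eq_of_natCast_eq ?_ hmid hlow)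
    rw [Nat.div_eq_of_lt x.isLt, Nat.div_eq_of_lt y.isLt]

variable {p}

@[simp]
theorem digitsEquiv_apply (x : Fin (p ^ 2)) :
    digitsEquiv p x = ((((x : ℕ) / p : ℕ) : ZMod p), ((x : ℕ) : ZMod p)) :=
  rfl

theorem digitsEquiv_symm_natCast (X r : ZMod p) :
    ((((digitsEquiv p).symm (X, r) : ℕ) / p : ℕ) : ZMod p) = X ∧
      (((digitsEquiv p).symm (X, r) : ℕ) : ZMod p) = r :=
  Prod.mk.inj ((digitsEquiv p).apply_symm_apply (X, r))

theorem card_common_positions (R₁ R₂ : ZMod p → ZMod p → ZMod p) (S₁ S₂ : ZMod p → ZMod p) :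
    (Finset.univ.filter (fun xy : Fin (p ^ 2) × Fin (p ^ 2) =>
        (((xy.1 : ℕ) : ZMod p) =
            R₁ (((xy.1 : ℕ) / p : ℕ) : ZMod p) (((xy.2 : ℕ) / p : ℕ) : ZMod p) ∧
          ((xy.2 : ℕ) : ZMod p) = S₁ (((xy.1 : ℕ) / p : ℕ) : ZMod p)) ∧
        (((xy.1 : ℕ) : ZMod p) =
            R₂ (((xy.1 : ℕ) / p : ℕ) : ZMod p) (((xy.2 : ℕ) / p : ℕ) : ZMod p) ∧
          ((xy.2 : ℕ) : ZMod p) = S₂ (((xy.1 : ℕ) / p : ℕ) : ZMod p)))).card =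
      (Finset.univ.filter (fun XY : ZMod p × ZMod p =>
        R₁ XY.1 XY.2 = R₂ XY.1 XY.2 ∧ S₁ XY.1 = S₂ XY.1)).card := by
  apply Finset.card_nbij' (fun xy => ((digitsEquiv p xy.1).1, (digitsEquiv p xy.2).1))
    (fun XY => ((digitsEquiv p).symm (XY.1, R₁ XY.1 XY.2), (digitsEquiv p).symm (XY.2, S₁ XY.1)))
  · rintro ⟨x, y⟩ hxy
    simp only [Finset.coe_filter, Finset.mem_univ, true_and, Set.mem_ofPred_eq] at hxy ⊢
    obtain ⟨⟨hR₁, hS₁⟩, hR₂, hS₂⟩ := hxy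
    exact ⟨hR₁.symm.trans hR₂, hS₁.symm.trans hS₂⟩
  · rintro ⟨X, Y⟩ hXY
    simp_all [digitsEquiv_symm_natCast]
  · rintro ⟨x, y⟩ hxy
    simp only [Finset.coe_filter, Finset.mem_univ, true_and, Set.mem_ofPred_eq] at hxy
    obtain ⟨⟨hR₁, hS₁⟩, -⟩ := hxy
    simp only [Prod.mk.injEq, Equiv.symm_apply_eq, digitsEquiv_apply, hR₁, hS₁, and_self]
  · rintro ⟨X, Y⟩ -
    simp

end Digits

section AffineSystem

variable {α β F : Type*} [Fintype α] [Fintype β] [Field F] [DecidableEq F] {φ : α → F} {ψ : β → F}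

theorem card_filter_affine_eq_one (hφ : Function.Bijective φ) (hψ : Function.Bijective ψ)
    {a₁ a₂ b₁ b₂ c₁ c₂ : F} (hc : c₁ ≠ c₂) :
    (Finset.univ.filter (fun XY : α × β =>
        b₁ + c₁ * (φ XY.1 + ψ XY.2) = b₂ + c₂ * (φ XY.1 + ψ XY.2) ∧
          a₁ + c₁ * φ XY.1 = a₂ + c₂ * φ XY.1)).card = 1 := by
  have hc' : c₁ - c₂ ≠ 0 := sub_ne_zero.mpr hc
  obtain ⟨X₀, hX₀⟩ := hφ.2 ((a₂ - a₁) / (c₁ - c₂))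
  obtain ⟨Y₀, hY₀⟩ := hψ.2 ((b₂ - b₁ - (a₂ - a₁)) / (c₁ - c₂))
  refine Finset.card_eq_one.mpr ⟨(X₀, Y₀), Finset.ext fun ⟨X, Y⟩ => ?_⟩
  simp only [Finset.mem_filter, Finset.mem_univ, true_and, Finset.mem_singleton, Prod.mk.injEq,
    ← hφ.1.eq_iff, ← hψ.1.eq_iff, hX₀, hY₀]
  rw [eq_div_iff hc', eq_div_iff hc']
  constructor
  · rintro ⟨hb, ha⟩
    exact ⟨by linear_combination ha, by linear_combination hb - ha⟩
  · rintro ⟨hu, hv⟩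
    exact ⟨by linear_combination hu + hv, by linear_combination hu⟩

end AffineSystem

section Layers

variable {p w : ℕ} (φ ψ : ZMod p → ZMod p) (ζ : ℕ → ZMod p → ZMod p)

/-- Row `ℓ` of `Hmat` has exactly one `1` in the `p × p` block whose columns have high base-`p`
digits `(X, Y)`; its low digits are `xShift ℓ X Y` and `yShift ℓ X`. -/
def xShift (ℓ : ℕ) (X Y : ZMod p) : ZMod p :=
  (ℓ : ZMod p) + ζ (ℓ / p ^ 2) ((ℓ / p : ℕ) : ZMod p) + ((ℓ / p ^ 2 : ℕ) : ZMod p) * (φ X + ψ Y)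

def yShift (ℓ : ℕ) (X : ZMod p) : ZMod p :=
  (ℓ : ZMod p) + ((ℓ / p ^ 2 : ℕ) : ZMod p) * φ X

theorem Hmat_eq_one_iff (ℓ : Fin (w * p ^ 2)) (xy : Fin (p ^ 2) × Fin (p ^ 2)) :
    Hmat p w φ ψ ζ ℓ xy = 1 ↔
      ((xy.1 : ℕ) : ZMod p) =
          xShift φ ψ ζ ℓ (((xy.1 : ℕ) / p : ℕ) : ZMod p) (((xy.2 : ℕ) / p : ℕ) : ZMod p) ∧
        ((xy.2 : ℕ) : ZMod p) = yShift φ ℓ (((xy.1 : ℕ) / p : ℕ) : ZMod p) := by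
  simp [Hmat, xShift, yShift]

variable {φ ψ ζ}

theorem eq_of_xShift_eq_of_yShift_eq {ℓ₁ ℓ₂ : ℕ} {X Y : ZMod p}
    (hζ : Function.Injective (ζ (ℓ₁ / p ^ 2))) (hblock : ℓ₁ / p ^ 2 = ℓ₂ / p ^ 2)
    (hx : xShift φ ψ ζ ℓ₁ X Y = xShift φ ψ ζ ℓ₂ X Y) (hy : yShift φ ℓ₁ X = yShift φ ℓ₂ X) :
    ℓ₁ = ℓ₂ := by
  simp only [xShift, yShift, ← hblock] at hx hy
  have hlow : (ℓ₁ : ZMod p) = ℓ₂ := add_right_cancel hy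
  rw [hlow, add_left_inj, add_right_inj] at hx
  exact eq_of_div_sq_eq_of_natCast_eq hblock (hζ hx) hlow

end Layers

theorem stmt_5_general (p w : ℕ) (hp : p.Prime) (hwp : w ≤ p)
    (φ ψ : ZMod p → ZMod p) (hφ : Function.Bijective φ) (hψ : Function.Bijective ψ)
    (ζ : ℕ → ZMod p → ZMod p) (hζ : ∀ m < w, Function.Bijective (ζ m))
    (ℓ₁ ℓ₂ : Fin (w * p ^ 2)) :
    (Finset.univ.filter (fun xy : Fin (p ^ 2) × Fin (p ^ 2) =>
        Hmat p w φ ψ ζ ℓ₁ xy = 1 ∧ Hmat p w φ ψ ζ ℓ₂ xy = 1)).card =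
      if ℓ₁ = ℓ₂ then p ^ 2
      else if (ℓ₁ : ℕ) / p ^ 2 ≠ (ℓ₂ : ℕ) / p ^ 2 then 1 else 0 := by
  have := Fact.mk hp
  have hblock₁ : (ℓ₁ : ℕ) / p ^ 2 < w := ℓ₁.divNat.isLt
  have hblock₂ : (ℓ₂ : ℕ) / p ^ 2 < w := ℓ₂.divNat.isLt
  simp only [Hmat_eq_one_iff]
  rw [card_common_positions]
  split_ifs with heq hblock
  · subst heq
    simp [sq]
  · refine card_filter_affine_eq_one hφ hψ fun hcast => hblock ?_
    rwa [ZMod.natCast_eq_natCast_iff', Nat.mod_eq_of_lt (hblock₁.trans_le hwp),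
      Nat.mod_eq_of_lt (hblock₂.trans_le hwp)] at hcast
  · refine Finset.card_eq_zero.mpr (Finset.filter_eq_empty_iff.mpr ?_)
    rintro ⟨X, Y⟩ - ⟨hx, hy⟩
    exact heq (Fin.ext (eq_of_xShift_eq_of_yShift_eq (hζ _ hblock₁).injective
      (not_not.mp hblock) hx hy))

/-- Lemma 4 (inner product between any two horizontal layers): the number of column
positions where rows `ℓ₁` and `ℓ₂` both equal `1` is `p²` if `ℓ₁ = ℓ₂`, is `1` if the
two layers lie in different horizontal block-layers, and is `0` otherwise. -/
theorem stmt_5 (p w : ℕ) (hp : p.Prime) (hodd : Odd p) (hw1 : 1 ≤ w) (hwp : w ≤ p)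
    (φ ψ : ZMod p → ZMod p) (hφ : Function.Bijective φ) (hψ : Function.Bijective ψ)
    (ζ : ℕ → ZMod p → ZMod p) (hζ : ∀ m < w, Function.Bijective (ζ m))
    (ℓ₁ ℓ₂ : Fin (w * p ^ 2)) :
    (Finset.univ.filter (fun xy : Fin (p ^ 2) × Fin (p ^ 2) =>
        Hmat p w φ ψ ζ ℓ₁ xy = 1 ∧ Hmat p w φ ψ ζ ℓ₂ xy = 1)).card =
      if ℓ₁ = ℓ₂ then p ^ 2
      else if (ℓ₁ : ℕ) / p ^ 2 ≠ (ℓ₂ : ℕ) / p ^ 2 then 1 else 0 :=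
  stmt_5_general p w hp hwp φ ψ hφ hψ ζ hζ ℓ₁ ℓ₂
end

section
/- For the binary matrix H described in the context (p an odd prime, 1 ≤ w ≤ p), for every column position (x,y) with x, y ∈ {0,…,p²−1} and every horizontal block-layer index m ∈ {0,…,w−1}, there is exactly one layer ℓ with m·p² ≤ ℓ < (m+1)·p² such that H(ℓ,(x,y)) = 1. Consequently, the sum over GF(2) of all p² rows belonging to any single horizontal block-layer is the all-ones row vector. -/
open Matrix

/-- Linear-dependence observation used in Theorem 2: in every horizontal block-layer and
for every column position there is exactly one incident row, so the GF(2)-sum of the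
`p²` rows of any single horizontal block-layer is the all-ones row vector. -/
theorem stmt_7 (p w : ℕ) (hp : p.Prime) (hodd : Odd p) (hw1 : 1 ≤ w) (hwp : w ≤ p)
    (φ ψ : ZMod p → ZMod p) (hφ : Function.Bijective φ) (hψ : Function.Bijective ψ)
    (ζ : ℕ → ZMod p → ZMod p) (hζ : ∀ m < w, Function.Bijective (ζ m)) :
    (∀ xy : Fin (p ^ 2) × Fin (p ^ 2), ∀ m < w,
        ∃! ℓ : Fin (w * p ^ 2),
          m * p ^ 2 ≤ (ℓ : ℕ) ∧ (ℓ : ℕ) < (m + 1) * p ^ 2 ∧ Hmat p w φ ψ ζ ℓ xy = 1) ∧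
    (∀ m < w, ∀ xy : Fin (p ^ 2) × Fin (p ^ 2),
        (∑ ℓ ∈ Finset.univ.filter (fun ℓ : Fin (w * p ^ 2) =>
            m * p ^ 2 ≤ (ℓ : ℕ) ∧ (ℓ : ℕ) < (m + 1) * p ^ 2),
          Hmat p w φ ψ ζ ℓ xy) = 1) := by
  haveI : Fact p.Prime := ⟨hp⟩
  have hp0 : 0 < p := hp.pos
  have hp2 : 0 < p ^ 2 := pow_pos hp0 2
  -- characterization of Hmat = 1
  have hchar : ∀ (ℓ : Fin (w * p ^ 2)) (xy : Fin (p ^ 2) × Fin (p ^ 2)),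
      Hmat p w φ ψ ζ ℓ xy = 1 ↔
      ((((xy.1 : ℕ)) : ZMod p) =
          ((ℓ : ℕ) : ZMod p) + ζ ((ℓ : ℕ) / p ^ 2) (((ℓ : ℕ) / p : ℕ) : ZMod p) +
            (((ℓ : ℕ) / p ^ 2 : ℕ) : ZMod p) *
              (φ (((xy.1 : ℕ) / p : ℕ) : ZMod p) + ψ (((xy.2 : ℕ) / p : ℕ) : ZMod p)) ∧
        ((xy.2 : ℕ) : ZMod p) =
          ((ℓ : ℕ) : ZMod p) +
            (((ℓ : ℕ) / p ^ 2 : ℕ) : ZMod p) * φ (((xy.1 : ℕ) / p : ℕ) : ZMod p)) := by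
    intro ℓ xy
    unfold Hmat
    split_ifs with h
    · simp [h]
    · simp only [h, iff_false]
      exact zero_ne_one
  -- arithmetic facts for layers in block m
  have hdiv2 : ∀ m r : ℕ, r < p ^ 2 → (m * p ^ 2 + r) / p ^ 2 = m := by
    intro m r hr
    rw [Nat.add_comm, Nat.mul_comm, Nat.add_mul_div_left _ _ hp2, Nat.div_eq_of_lt hr,
      Nat.zero_add]
  have hdivp : ∀ m r : ℕ, (m * p ^ 2 + r) / p = r / p + p * m := by
    intro m r
    have : m * p ^ 2 + r = r + p * (p * m) := by ring
    rw [this, Nat.add_mul_div_left _ _ hp0]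
  have hcastℓ : ∀ m r : ℕ, ((m * p ^ 2 + r : ℕ) : ZMod p) = ((r : ℕ) : ZMod p) := by
    intro m r
    push_cast
    simp [ZMod.natCast_self]
  have hcastdiv : ∀ m r : ℕ, (((m * p ^ 2 + r) / p : ℕ) : ZMod p) = ((r / p : ℕ) : ZMod p) := by
    intro m r
    rw [hdivp m r]
    push_cast
    simp [ZMod.natCast_self]
  -- Part 1
  have part1 : ∀ xy : Fin (p ^ 2) × Fin (p ^ 2), ∀ m < w,
      ∃! ℓ : Fin (w * p ^ 2),
        m * p ^ 2 ≤ (ℓ : ℕ) ∧ (ℓ : ℕ) < (m + 1) * p ^ 2 ∧ Hmat p w φ ψ ζ ℓ xy = 1 := by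
    intro xy m hm
    set A : ZMod p := φ (((xy.1 : ℕ) / p : ℕ) : ZMod p) with hA
    set B : ZMod p := ψ (((xy.2 : ℕ) / p : ℕ) : ZMod p) with hB
    set a : ZMod p := ((xy.2 : ℕ) : ZMod p) - (m : ZMod p) * A with ha
    set c : ZMod p := ((xy.1 : ℕ) : ZMod p) - a - (m : ZMod p) * (A + B) with hc
    obtain ⟨b, hb⟩ := (hζ m hm).2 c
    have hbv : b.val < p := ZMod.val_lt b
    have hav : a.val < p := ZMod.val_lt a
    set r : ℕ := p * b.val + a.val with hrdef
    have hr : r < p ^ 2 := by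
      have h1 : p * b.val + a.val < p * (b.val + 1) := by
        rw [Nat.mul_add, Nat.mul_one]; omega
      have h2 : p * (b.val + 1) ≤ p * p := Nat.mul_le_mul_left p (by omega)
      have : p * p = p ^ 2 := by ring
      omega
    have hrp : r / p = b.val := by
      rw [hrdef, Nat.add_comm, Nat.add_mul_div_left _ _ hp0, Nat.div_eq_of_lt hav,
        Nat.zero_add]
    have hrcast : ((r : ℕ) : ZMod p) = a := by
      rw [hrdef]; push_cast; simp [ZMod.natCast_self, ZMod.natCast_val, ZMod.cast_id]
    have hℓlt : m * p ^ 2 + r < w * p ^ 2 := by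
      have : (m + 1) * p ^ 2 ≤ w * p ^ 2 := Nat.mul_le_mul_right _ (by omega)
      have h' : m * p ^ 2 + r < (m + 1) * p ^ 2 := by
        rw [Nat.add_mul, Nat.one_mul]; omega
      omega
    refine ⟨⟨m * p ^ 2 + r, hℓlt⟩, ⟨by simp, by
      simp only [Nat.add_mul, Nat.one_mul]; omega, ?_⟩, ?_⟩
    · rw [hchar]
      simp only
      rw [hdiv2 m r hr, hcastℓ m r, hcastdiv m r, hrp, hrcast]
      constructor
      · rw [ZMod.natCast_val, ZMod.cast_id, hb, hc]
        ring
      · rw [ha]; ring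
    · rintro ℓ' ⟨h1, h2, h3⟩
      set r' : ℕ := (ℓ' : ℕ) - m * p ^ 2 with hr'def
      have hℓ'eq : (ℓ' : ℕ) = m * p ^ 2 + r' := by omega
      have hr' : r' < p ^ 2 := by
        have := h2; rw [Nat.add_mul, Nat.one_mul] at this; omega
      rw [hchar] at h3
      rw [hℓ'eq, hdiv2 m r' hr', hcastℓ m r', hcastdiv m r'] at h3
      obtain ⟨hc1, hc2⟩ := h3
      -- from hc2 : r' ≡ a
      have hr'a : ((r' : ℕ) : ZMod p) = a := by
        rw [ha]; rw [hc2]; ring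
      -- from hc1 : ζ m (r'/p) = c
      have hζeq : ζ m (((r' / p : ℕ) : ZMod p)) = c := by
        rw [hc]
        rw [hc1, hr'a]
        ring
      have hbeq : (((r' / p : ℕ) : ZMod p)) = b := (hζ m hm).1 (by rw [hζeq, hb])
      have hr'p_lt : r' / p < p := by
        have : r' < p * p := by rw [← pow_two]; exact hr'
        exact Nat.div_lt_of_lt_mul (by omega)
      have hr'p : r' / p = b.val := by
        have := congrArg ZMod.val hbeq
        rwa [ZMod.val_natCast_of_lt hr'p_lt] at this
      have hr'mod : r' % p = a.val := by
        have := congrArg ZMod.val hr'a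
        rwa [ZMod.val_natCast] at this
      have : r' = r := by
        have hdm := Nat.div_add_mod r' p
        rw [hr'p, hr'mod] at hdm
        omega
      apply Fin.ext
      rw [hℓ'eq, this]
  refine ⟨part1, ?_⟩
  intro m hm xy
  obtain ⟨ℓ0, ⟨hm1, hm2, hm3⟩, huniq⟩ := part1 xy m hm
  rw [Finset.sum_eq_single_of_mem ℓ0 (by simp [hm1, hm2]) ?_]
  · exact hm3
  · intro b hbmem hbne
    simp only [Finset.mem_filter, Finset.mem_univ, true_and] at hbmem
    have h01 : Hmat p w φ ψ ζ b xy = 0 ∨ Hmat p w φ ψ ζ b xy = 1 := by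
      unfold Hmat; split_ifs <;> simp
    rcases h01 with h | h
    · exact h
    · exact absurd (huniq b ⟨hbmem.1, hbmem.2, h⟩) hbne
end

section
/- For the binary matrix H described in the context (p an odd prime, 1 ≤ w ≤ p), viewed as a matrix over the field GF(2) = ZMod 2 with w·p² rows and p⁴ columns, the rank of H equals p² + (w−1)(p²−1). -/
open Matrix

/-!
After a change of coordinates `H` becomes the incidence matrix between the points `(m, v)`,
`m < w`, `v ∈ 𝔽ₚ²`, and the lines `{(m, t - m • d) | m < w}` of direction `d` through `t`.
A left-kernel vector `c` therefore satisfies `∑ₘ c(m, t - m • d) = 0` for all `d, t`.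
Summing this over all `d` with `t = t₀ + k • d` isolates `p² · c(k, t₀)`, while for `m ≠ k` the
point `t₀ + (k - m) • d` runs over all of `𝔽ₚ²`; as `p²` is odd, `c(k, ·)` is constant.
So the left kernel consists of the vectors constant on each layer with layer values summing to
zero, it has dimension `w - 1`, and the rank is `w p² - (w - 1)`.
-/

open Function

variable {ι K R V : Type*}

variable (R V) in
def lineIncidence [Zero R] [One R] [Add V] [SMul K V] [DecidableEq V] (a : ι → K) :
    Matrix (ι × V) (V × V) R :=
  fun x y => if y.2 = x.2 + a x.1 • y.1 then 1 else 0

section LineIncidence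

variable [Fintype ι] [Field K] [Field R] [AddCommGroup V] [Module K V] [Fintype V]

theorem sum_comp_add_smul {M : Type*} [AddCommMonoid M] (f : V → M) (t : V) {b : K}
    (hb : b ≠ 0) : ∑ d, f (t + b • d) = ∑ v, f v :=
  Fintype.sum_bijective _
    ((add_right_injective t).comp (smul_right_injective V hb)).bijective_of_finite _ _
    fun _ => rfl

variable [DecidableEq V]

theorem vecMul_lineIncidence_apply (a : ι → K) (c : ι × V → R) (d t : V) :
    (c ᵥ* lineIncidence R V a) (d, t) = ∑ m, c (m, t - a m • d) := by
  simp only [vecMul, dotProduct, lineIncidence, Fintype.sum_prod_type, mul_ite, mul_one,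
    mul_zero, eq_comm (a := t), ← eq_sub_iff_add_eq, Finset.sum_ite_eq', Finset.mem_univ,
    if_true]

theorem apply_eq_of_vecMul_lineIncidence_eq_zero [DecidableEq ι] {a : ι → K}
    (ha : Injective a) (hV : (Fintype.card V : R) ≠ 0) {c : ι × V → R}
    (hc : c ᵥ* lineIncidence R V a = 0) (k : ι) (v w : V) : c (k, v) = c (k, w) := by
  have key : ∀ t,
      c (k, t) * Fintype.card V + ∑ m ∈ Finset.univ.erase k, ∑ v, c (m, v) = 0 := by
    intro t
    have h : ∑ d, (c ᵥ* lineIncidence R V a) (d, t + a k • d) = 0 := by simp [hc]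
    simp only [vecMul_lineIncidence_apply] at h
    rw [Finset.sum_comm, ← Finset.add_sum_erase _ _ (Finset.mem_univ k)] at h
    convert h using 2
    · simp [mul_comm]
    · refine Finset.sum_congr rfl fun m hm => ?_
      have hb : a k - a m ≠ 0 := sub_ne_zero.2 (ha.ne (Finset.ne_of_mem_erase hm).symm)
      simp only [add_sub_assoc, ← sub_smul]
      exact (sum_comp_add_smul _ t hb).symm
  exact mul_right_cancel₀ hV (add_right_cancel ((key v).trans (key w).symm))

theorem ker_vecMulLinear_lineIncidence {a : ι → K} (ha : Injective a)
    (hV : (Fintype.card V : R) ≠ 0) :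
    LinearMap.ker (lineIncidence R V a).vecMulLinear =
      (LinearMap.ker (Fintype.linearCombination R fun _ : ι => (1 : R))).map
        (LinearMap.funLeft R R Prod.fst) := by
  classical
  ext c
  simp only [LinearMap.mem_ker, vecMulLinear_apply, Submodule.mem_map,
    Fintype.linearCombination_apply, smul_eq_mul, mul_one]
  constructor
  · intro hc
    refine ⟨fun m => c (m, 0), ?_, funext fun x => ?_⟩
    · simpa [vecMul_lineIncidence_apply] using congrFun hc (0, 0)
    · exact apply_eq_of_vecMul_lineIncidence_eq_zero ha hV hc x.1 0 x.2
  · rintro ⟨e, he, rfl⟩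
    ext ⟨d, t⟩
    simpa [vecMul_lineIncidence_apply] using he

end LineIncidence

theorem finrank_ker_linearCombination_one [Fintype ι] [Nonempty ι] [Field R] :
    Module.finrank R (LinearMap.ker (Fintype.linearCombination R fun _ : ι => (1 : R))) =
      Fintype.card ι - 1 := by
  classical
  have hsurj : Surjective (Fintype.linearCombination R fun _ : ι => (1 : R)) := fun x =>
    ⟨Pi.single (Classical.arbitrary ι) x, by simp [Fintype.linearCombination_apply]⟩
  have h := LinearMap.finrank_range_add_finrank_ker
    (Fintype.linearCombination R fun _ : ι => (1 : R))
  rw [LinearMap.range_eq_top.2 hsurj, finrank_top, Module.finrank_self,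
    Module.finrank_fintype_fun_eq_card] at h
  omega

theorem rank_lineIncidence_add [Fintype ι] [Nonempty ι] [Field K] [Field R] [AddCommGroup V]
    [Module K V] [Fintype V] [DecidableEq V] {a : ι → K} (ha : Injective a)
    (hV : (Fintype.card V : R) ≠ 0) :
    (lineIncidence R V a).rank + (Fintype.card ι - 1) = Fintype.card ι * Fintype.card V := by
  have h := LinearMap.finrank_range_add_finrank_ker (lineIncidence R V a).vecMulLinear
  have hfst : Injective (LinearMap.funLeft R R (Prod.fst : ι × V → ι)) :=
    LinearMap.funLeft_injective_of_surjective _ _ _ Prod.fst_surjective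
  rw [ker_vecMulLinear_lineIncidence ha hV,
    ← LinearEquiv.finrank_eq (Submodule.equivMapOfInjective _ hfst _),
    finrank_ker_linearCombination_one, Module.finrank_fintype_fun_eq_card, Fintype.card_prod,
    ← mulVecLin_transpose] at h
  rwa [← rank_transpose]

theorem Nat.eq_of_div_sq_eq_of_natCast_eq {p a b : ℕ} (h₂ : a / p ^ 2 = b / p ^ 2)
    (h₁ : ((a / p : ℕ) : ZMod p) = (b / p : ℕ)) (h₀ : (a : ZMod p) = b) : a = b := by
  rw [ZMod.natCast_eq_natCast_iff] at h₀ h₁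
  refine Nat.ext_div_modEq (Nat.ext_div_modEq ?_ h₁) h₀
  rwa [Nat.div_div_eq_div_mul, Nat.div_div_eq_div_mul, ← sq]

theorem Fin.eq_of_natCast_div_eq {p : ℕ} {x y : Fin (p ^ 2)}
    (h₁ : ((x / p : ℕ) : ZMod p) = (y / p : ℕ)) (h₀ : (x : ZMod p) = y) : x = y :=
  Fin.ext <| Nat.eq_of_div_sq_eq_of_natCast_eq
    (by rw [Nat.div_eq_of_lt x.2, Nat.div_eq_of_lt y.2]) h₁ h₀

namespace Hmat

variable {p w : ℕ} {φ ψ : ZMod p → ZMod p} {ζ : ℕ → ZMod p → ZMod p}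

variable (w ζ) in
def rowCoord (ℓ : Fin (w * p ^ 2)) : Fin w × ZMod p × ZMod p :=
  (⟨ℓ / p ^ 2, Nat.div_lt_of_lt_mul (mul_comm w _ ▸ ℓ.2)⟩, (ℓ : ZMod p),
    ζ (ℓ / p ^ 2) ((ℓ / p : ℕ) : ZMod p))

variable (φ ψ) in
def colCoord (xy : Fin (p ^ 2) × Fin (p ^ 2)) : (ZMod p × ZMod p) × ZMod p × ZMod p :=
  ((φ ((xy.1 / p : ℕ) : ZMod p), ψ ((xy.2 / p : ℕ) : ZMod p)),
    ((xy.2 : ZMod p), (xy.1 : ZMod p) - xy.2))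

theorem rowCoord_bijective [NeZero p] (hζ : ∀ m < w, Injective (ζ m)) :
    Bijective (rowCoord w ζ) := by
  rw [Fintype.bijective_iff_injective_and_card]
  refine ⟨fun ℓ ℓ' h => ?_, by simp [ZMod.card, sq]⟩
  simp only [rowCoord, Prod.mk.injEq, Fin.mk.injEq] at h
  obtain ⟨h₂, h₀, h₁⟩ := h
  rw [h₂] at h₁
  have hm : (ℓ' : ℕ) / p ^ 2 < w := Nat.div_lt_of_lt_mul (mul_comm w _ ▸ ℓ'.2)
  exact Fin.ext (Nat.eq_of_div_sq_eq_of_natCast_eq h₂ (hζ _ hm h₁) h₀)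

theorem colCoord_bijective [NeZero p] (hφ : Injective φ) (hψ : Injective ψ) :
    Bijective (colCoord φ ψ) := by
  rw [Fintype.bijective_iff_injective_and_card]
  refine ⟨fun ⟨x, y⟩ ⟨x', y'⟩ h => ?_, by simp [ZMod.card, sq]⟩
  simp only [colCoord, Prod.mk.injEq] at h
  obtain ⟨⟨hx₁, hy₁⟩, hy₀, hx₀⟩ := h
  rw [hy₀, sub_left_inj] at hx₀
  exact Prod.ext (Fin.eq_of_natCast_div_eq (hφ hx₁) hx₀)
    (Fin.eq_of_natCast_div_eq (hψ hy₁) hy₀)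

theorem eq_submatrix_lineIncidence :
    Hmat p w φ ψ ζ = (lineIncidence (ZMod 2) (ZMod p × ZMod p)
      fun m : Fin w => ((m : ℕ) : ZMod p)).submatrix (rowCoord w ζ) (colCoord φ ψ) := by
  ext ℓ ⟨x, y⟩
  simp only [Hmat, lineIncidence, submatrix_apply, rowCoord, colCoord, Prod.ext_iff,
    Prod.fst_add, Prod.snd_add, Prod.smul_fst, Prod.smul_snd, smul_eq_mul]
  congr 1
  exact propext ⟨fun ⟨hx, hy⟩ => ⟨hy, by linear_combination hx - hy⟩,
    fun ⟨hy, hx⟩ => ⟨by linear_combination hx + hy, hy⟩⟩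

end Hmat

/-- Theorem 2 (gfrank of the parity-check tensor): the rank of `H` over GF(2) equals
`p² + (w−1)(p²−1)`. -/
theorem stmt_8 (p w : ℕ) (hp : p.Prime) (hodd : Odd p) (hw1 : 1 ≤ w) (hwp : w ≤ p)
    (φ ψ : ZMod p → ZMod p) (hφ : Function.Bijective φ) (hψ : Function.Bijective ψ)
    (ζ : ℕ → ZMod p → ZMod p) (hζ : ∀ m < w, Function.Bijective (ζ m)) :
    (Hmat p w φ ψ ζ).rank = p ^ 2 + (w - 1) * (p ^ 2 - 1) := by
  have : Fact p.Prime := ⟨hp⟩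
  have : Nonempty (Fin w) := ⟨⟨0, hw1⟩⟩
  have hlayer : Injective fun m : Fin w => ((m : ℕ) : ZMod p) := fun m n h => Fin.ext <| by
    simpa [ZMod.val_cast_of_lt (m.2.trans_le hwp), ZMod.val_cast_of_lt (n.2.trans_le hwp)]
      using congrArg ZMod.val h
  have hcard : (Fintype.card (ZMod p × ZMod p) : ZMod 2) ≠ 0 := by
    simp [ZMod.card, ZMod.natCast_eq_one_iff_odd.2 (hodd.mul hodd)]
  have h := rank_lineIncidence_add hlayer hcard
  rw [Hmat.eq_submatrix_lineIncidence]
  refine (rank_submatrix _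
    (.ofBijective _ (Hmat.rowCoord_bijective fun m hm => (hζ m hm).injective))
    (.ofBijective _ (Hmat.colCoord_bijective hφ.injective hψ.injective))).trans ?_
  simp only [Fintype.card_fin, Fintype.card_prod, ZMod.card, ← sq] at h
  zify [hw1, Nat.one_le_pow 2 p hp.pos] at h ⊢
  linear_combination h
end

section
/- For the binary matrix H described in the context (p an odd prime, 1 ≤ w ≤ p), the kernel of the GF(2)-linear map v ↦ H·v from (ZMod 2)^{p⁴} to (ZMod 2)^{w·p²} has dimension (p² − w + 1)(p² − 1); that is, the 2-D classical QC-LDPC code with parity-check matrix H is a binary linear code of length p⁴ and dimension (p² − w + 1)(p² − 1). -/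
/-
Reindex the rows of `H` by `(m, P) ∈ Fin w × 𝔽ₚ²`, reading the layer `ℓ` in base `p`, and the
columns by pairs `(v, e) ∈ 𝔽ₚ² × 𝔽ₚ²`, reading the position `(x, y)` in base `p`; then `H` becomes
the incidence matrix `P = v + m • e`. A vector `c` in the left kernel is thus a family of functions
`f₀, …, f_{w-1}` on `𝔽ₚ²` with `∑ₘ fₘ (v + m • e) = 0` for all `v`, `e`. Replacing `e` by `u + e`
and by `u` and adding the two relations shows that the differences
`x ↦ fₘ₊₁ (x + (m + 1) • e) + fₘ₊₁ x` satisfy the same relations with `w - 1` functions. By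
induction they are constant, and as `m + 1 < p` is invertible mod `p`, the map `x ↦ fₘ₊₁ x + fₘ₊₁ 0`
is additive; an additive map from an `𝔽ₚ`-space to `ZMod 2` vanishes for odd `p`. Then `f₀` is
constant as well. So the left kernel consists of the block-constant vectors whose
constants sum to `0`, it has dimension `w - 1`, and `rank H = w p² - (w - 1)`.
-/

open Matrix

open Finset Module

section Lines

variable {p : ℕ} {V : Type*} [AddCommGroup V] [Module (ZMod p) V]

theorem apply_eq_apply_zero_of_add_add_eq (hodd : Odd p) {g : V → ZMod 2}
    (hg : ∀ x a, g (x + a) + g x = g a + g 0) (v : V) : g v = g 0 := by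
  let h : V →+ ZMod 2 := AddMonoidHom.mk' (fun x => g x + g 0) fun x a => by
    linear_combination (norm := ring_nf) hg x a
    reduce_mod_char
  have hv : h v = 0 := calc
    h v = p • h v := by rw [nsmul_eq_mul, hodd.natCast_zmod_two, one_mul]
    _ = 0 := by rw [← map_nsmul, ← Nat.cast_smul_eq_nsmul (ZMod p), ZMod.natCast_self,
      zero_smul, map_zero]
  change g v + g 0 = 0 at hv
  linear_combination (norm := ring_nf) hv
  reduce_mod_char

theorem sum_succ_shift_eq_zero {n : ℕ} {f : Fin (n + 1) → V → ZMod 2}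
    (hf : ∀ v u, ∑ m, f m (v + ((m : ℕ) : ZMod p) • u) = 0) (e : V) (v u : V) :
    ∑ k : Fin n, (f k.succ (v + ((k : ℕ) : ZMod p) • u + ((k.succ : ℕ) : ZMod p) • e)
      + f k.succ (v + ((k : ℕ) : ZMod p) • u)) = 0 := by
  have h₁ := hf (v - u) (u + e)
  have h₂ := hf (v - u) u
  simp only [Fin.sum_univ_succ, Fin.val_zero, Nat.cast_zero, zero_smul, add_zero,
    Fin.val_succ, Nat.cast_succ] at h₁ h₂ ⊢
  have hl₁ : ∀ k : Fin n, v - u + ((k : ℕ) + 1 : ZMod p) • (u + e)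
      = v + ((k : ℕ) : ZMod p) • u + ((k : ℕ) + 1 : ZMod p) • e := fun k => by
    simp only [smul_add, add_smul, one_smul]; abel
  have hl₂ : ∀ k : Fin n, v - u + ((k : ℕ) + 1 : ZMod p) • u
      = v + ((k : ℕ) : ZMod p) • u := fun k => by
    simp only [add_smul, one_smul]; abel
  simp only [hl₁, hl₂] at h₁ h₂
  rw [sum_add_distrib]
  linear_combination (norm := ring_nf) h₁ + h₂
  reduce_mod_char

theorem apply_eq_apply_zero_of_sum_smul_eq_zero [Fact p.Prime] (hodd : Odd p) :
    ∀ {n : ℕ}, n ≤ p → ∀ f : Fin n → V → ZMod 2,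
      (∀ v u, ∑ m, f m (v + ((m : ℕ) : ZMod p) • u) = 0) → ∀ m v, f m v = f m 0
  | 0, _, _, _, m, _ => m.elim0
  | n + 1, hn, f, hf, m, v => by
    have hsucc : ∀ (k : Fin n) v, f k.succ v = f k.succ 0 := by
      intro k
      have hk : ((k.succ : ℕ) : ZMod p) ≠ 0 := by
        rw [Ne, ZMod.natCast_eq_zero_iff]
        exact fun hdvd => by have := Nat.le_of_dvd k.succ_pos hdvd; omega
      refine apply_eq_apply_zero_of_add_add_eq hodd fun x a => ?_
      set e := ((k.succ : ℕ) : ZMod p)⁻¹ • a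
      have := apply_eq_apply_zero_of_sum_smul_eq_zero hodd (by omega)
        (fun k x => f k.succ (x + ((k.succ : ℕ) : ZMod p) • e) + f k.succ x)
        (sum_succ_shift_eq_zero hf e) k x
      simpa only [e, zero_add, smul_smul, mul_inv_cancel₀ hk, one_smul] using this
    cases m using Fin.cases with
    | zero =>
      have h₁ := hf v 0
      have h₂ := hf 0 0
      simp only [smul_zero, add_zero, Fin.sum_univ_succ, hsucc _ v] at h₁ h₂
      linear_combination h₁ - h₂
    | succ k => exact hsucc k v

end Lines

theorem Matrix.rank_add_finrank_ker_mulVecLin {m n K : Type*} [Field K] [Fintype n]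
    [DecidableEq n] (A : Matrix m n K) :
    A.rank + finrank K (LinearMap.ker A.mulVecLin) = Fintype.card n := by
  rw [Matrix.rank, LinearMap.finrank_range_add_finrank_ker, Module.finrank_fintype_fun_eq_card]

theorem finrank_ker_sum_proj {K : Type*} [Field K] {n : ℕ} (hn : 1 ≤ n) :
    finrank K (LinearMap.ker (∑ m : Fin n, LinearMap.proj m : (Fin n → K) →ₗ[K] K)) = n - 1 := by
  set σ : (Fin n → K) →ₗ[K] K := ∑ m : Fin n, LinearMap.proj m
  have hsurj : Function.Surjective σ :=
    fun z => ⟨Pi.single ⟨0, hn⟩ z, by simp [σ, LinearMap.sum_apply]⟩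
  have := LinearMap.finrank_range_add_finrank_ker σ
  rw [LinearMap.range_eq_top.mpr hsurj, finrank_top, finrank_self, finrank_fin_fun] at this
  omega

/-- Column `(v, e)` is the progression `v, v + e, …, v + (n - 1) • e`, its `m`-th point taken in
the `m`-th copy of `V`. -/
def lineMatrix (p n : ℕ) (V : Type*) [AddCommGroup V] [Module (ZMod p) V] [DecidableEq V] :
    Matrix (Fin n × V) (V × V) (ZMod 2) :=
  Matrix.of fun i j => if i.2 = j.1 + ((i.1 : ℕ) : ZMod p) • j.2 then 1 else 0

section LineMatrix

variable {p n : ℕ} {V : Type*} [AddCommGroup V] [Module (ZMod p) V] [DecidableEq V] [Fintype V]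

theorem vecMul_lineMatrix (c : Fin n × V → ZMod 2) (v e : V) :
    (c ᵥ* lineMatrix p n V) (v, e) = ∑ m, c (m, v + ((m : ℕ) : ZMod p) • e) := by
  simp [Matrix.vecMul, dotProduct, lineMatrix, Fintype.sum_prod_type]

theorem ker_vecMulLinear_lineMatrix [Fact p.Prime] (hodd : Odd p) (hn : n ≤ p) :
    LinearMap.ker (lineMatrix p n V).vecMulLinear =
      (LinearMap.ker (∑ m : Fin n, LinearMap.proj m)).map
        (LinearMap.funLeft (ZMod 2) (ZMod 2) (Prod.fst : Fin n × V → Fin n)) := by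
  ext c
  rw [LinearMap.mem_ker, Submodule.mem_map]
  constructor
  · intro hc
    have hlines : ∀ v e, ∑ m, c (m, v + ((m : ℕ) : ZMod p) • e) = 0 := fun v e => by
      rw [← vecMul_lineMatrix]; exact congrFun hc (v, e)
    have hconst := apply_eq_apply_zero_of_sum_smul_eq_zero hodd hn (fun m P => c (m, P)) hlines
    refine ⟨fun m => c (m, 0), by simpa [LinearMap.sum_apply] using hlines 0 0, ?_⟩
    funext ⟨m, P⟩
    exact (hconst m P).symm
  · rintro ⟨γ, hγ, rfl⟩
    funext ⟨v, e⟩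
    simpa [vecMul_lineMatrix, LinearMap.sum_apply] using hγ

theorem rank_lineMatrix [Fact p.Prime] (hodd : Odd p) (hn : 1 ≤ n) (hnp : n ≤ p) :
    (lineMatrix p n V).rank + (n - 1) = n * Fintype.card V := by
  have hinj : Function.Injective
      (LinearMap.funLeft (ZMod 2) (ZMod 2) (Prod.fst : Fin n × V → Fin n)) :=
    LinearMap.funLeft_injective_of_surjective _ _ _ Prod.fst_surjective
  have := (lineMatrix p n V)ᵀ.rank_add_finrank_ker_mulVecLin
  rw [rank_transpose, mulVecLin_transpose, ker_vecMulLinear_lineMatrix hodd hnp,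
    ← LinearEquiv.finrank_eq (Submodule.equivMapOfInjective _ hinj _),
    finrank_ker_sum_proj hn] at this
  simpa using this

end LineMatrix

theorem Nat.eq_of_two_digits_eq {p a b : ℕ} (h₀ : (a : ZMod p) = b)
    (h₁ : ((a / p : ℕ) : ZMod p) = (b / p : ℕ)) (h₂ : a / p ^ 2 = b / p ^ 2) : a = b := by
  have digit : ∀ {a b : ℕ}, (a : ZMod p) = b → a / p = b / p → a = b := fun {a b} h h' => by
    rw [ZMod.natCast_eq_natCast_iff'] at h
    rw [← Nat.div_add_mod a p, ← Nat.div_add_mod b p, h, h']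
  exact digit h₀ (digit h₁ (by rwa [Nat.div_div_eq_div_mul, ← sq, Nat.div_div_eq_div_mul, ← sq]))

section Reindex

variable {p w : ℕ}

theorem Fin.val_div_sq_lt (ℓ : Fin (w * p ^ 2)) : (ℓ : ℕ) / p ^ 2 < w :=
  Nat.div_lt_of_lt_mul (mul_comm w (p ^ 2) ▸ ℓ.isLt)

/- A layer `ℓ = m p² + a p + b` goes to `(m, (b + ζₘ a, b))` and a position `(X p + x, Y p + y)`
to `((x, y), -(φ X + ψ Y, φ X))`; the two congruences defining `Hmat` then say exactly that the
point `(b + ζₘ a, b)` of copy `m` lies on that column of `lineMatrix`. -/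

def layerCoord (ζ : ℕ → ZMod p → ZMod p) (ℓ : Fin (w * p ^ 2)) : Fin w × (ZMod p × ZMod p) :=
  (⟨ℓ / p ^ 2, ℓ.val_div_sq_lt⟩,
    ((ℓ : ZMod p) + ζ (ℓ / p ^ 2) ((ℓ / p : ℕ) : ZMod p), (ℓ : ZMod p)))

def positionCoord (φ ψ : ZMod p → ZMod p) (xy : Fin (p ^ 2) × Fin (p ^ 2)) :
    (ZMod p × ZMod p) × (ZMod p × ZMod p) :=
  ((((xy.1 : ℕ) : ZMod p), ((xy.2 : ℕ) : ZMod p)),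
    -(φ ((xy.1 / p : ℕ) : ZMod p) + ψ ((xy.2 / p : ℕ) : ZMod p), φ ((xy.1 / p : ℕ) : ZMod p)))

theorem Hmat_eq_submatrix (φ ψ : ZMod p → ZMod p) (ζ : ℕ → ZMod p → ZMod p) :
    Hmat p w φ ψ ζ =
      (lineMatrix p w (ZMod p × ZMod p)).submatrix (layerCoord ζ) (positionCoord φ ψ) := by
  have eq_add_mul_neg_iff : ∀ a x m s : ZMod p, a = x + m * -s ↔ x = a + m * s := fun _ _ _ _ =>
    ⟨fun h => by linear_combination -h, fun h => by linear_combination -h⟩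
  ext ℓ ⟨x, y⟩
  simp only [Hmat, lineMatrix, layerCoord, positionCoord, submatrix_apply, of_apply,
    Prod.ext_iff, Prod.smul_mk, Prod.fst_add, Prod.snd_add, Prod.neg_mk, smul_eq_mul,
    eq_add_mul_neg_iff, add_assoc]

theorem layerCoord_bijective [NeZero p] {ζ : ℕ → ZMod p → ZMod p}
    (hζ : ∀ m < w, Function.Injective (ζ m)) : Function.Bijective (layerCoord (w := w) ζ) := by
  refine (Fintype.bijective_iff_injective_and_card _).mpr ⟨fun ℓ ℓ' h => ?_, by simp [sq]⟩
  simp only [layerCoord, Prod.mk.injEq, Fin.mk.injEq] at h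
  obtain ⟨hm, ha, hb⟩ := h
  rw [hb, hm, add_right_inj] at ha
  exact Fin.ext (Nat.eq_of_two_digits_eq hb (hζ _ ℓ'.val_div_sq_lt ha) hm)

theorem positionCoord_bijective [NeZero p] {φ ψ : ZMod p → ZMod p}
    (hφ : Function.Injective φ) (hψ : Function.Injective ψ) :
    Function.Bijective (positionCoord φ ψ) := by
  refine (Fintype.bijective_iff_injective_and_card _).mpr
    ⟨fun ⟨x, y⟩ ⟨x', y'⟩ h => ?_, by simp [sq]⟩
  simp only [positionCoord, Prod.mk.injEq, neg_inj] at h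
  obtain ⟨⟨hx, hy⟩, hs, hX⟩ := h
  rw [hX, add_right_inj] at hs
  have hsmall : ∀ z : Fin (p ^ 2), (z : ℕ) / p ^ 2 = 0 := fun z => Nat.div_eq_of_lt z.isLt
  exact Prod.ext (Fin.ext (Nat.eq_of_two_digits_eq hx (hφ hX) (by rw [hsmall, hsmall])))
    (Fin.ext (Nat.eq_of_two_digits_eq hy (hψ hs) (by rw [hsmall, hsmall])))

end Reindex

/-- Dimension claim of Theorem 3: the kernel of `v ↦ H · v` over GF(2) has dimension
`(p² − w + 1)(p² − 1)`, i.e. the 2-D classical QC-LDPC code with parity-check matrix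
`H` is a binary `[p⁴, (p²−w+1)(p²−1)]₂` linear code. -/
theorem stmt_9 (p w : ℕ) (hp : p.Prime) (hodd : Odd p) (hw1 : 1 ≤ w) (hwp : w ≤ p)
    (φ ψ : ZMod p → ZMod p) (hφ : Function.Bijective φ) (hψ : Function.Bijective ψ)
    (ζ : ℕ → ZMod p → ZMod p) (hζ : ∀ m < w, Function.Bijective (ζ m)) :
    Module.finrank (ZMod 2)
        ↥(LinearMap.ker (Matrix.mulVecLin (Hmat p w φ ψ ζ))) =
      (p ^ 2 - w + 1) * (p ^ 2 - 1) := by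
  have : Fact p.Prime := ⟨hp⟩
  have hrank : (Hmat p w φ ψ ζ).rank + (w - 1) = w * p ^ 2 := by
    have := rank_lineMatrix (V := ZMod p × ZMod p) hodd hw1 hwp
    rwa [← rank_submatrix _ (Equiv.ofBijective _ (layerCoord_bijective fun m hm => (hζ m hm).1))
      (Equiv.ofBijective _ (positionCoord_bijective hφ.1 hψ.1)), Equiv.coe_ofBijective,
      Equiv.coe_ofBijective, ← Hmat_eq_submatrix, Fintype.card_prod, ZMod.card, ← sq] at this
  have hnull := (Hmat p w φ ψ ζ).rank_add_finrank_ker_mulVecLin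
  rw [Fintype.card_prod, Fintype.card_fin] at hnull
  have hwq : w ≤ p ^ 2 := hwp.trans (Nat.le_self_pow two_ne_zero p)
  zify [hwq, hw1.trans hwq, hw1] at hrank hnull ⊢
  linear_combination hnull - hrank
end

section
/- For the binary matrix H described in the context (p an odd prime, 1 ≤ w ≤ p), for every position (x₀, y₀) with x₀, y₀ ∈ {0,…,p²−1} there exists a layer ℓ in the first horizontal block-layer (0 ≤ ℓ < p²) such that H(ℓ,(x₀,y₀)) = 1 and H(ℓ,(x,y)) = 0 for every position (x,y) ≠ (x₀,y₀) with x, y ∈ {0,…,p²−1}, |x − x₀| < p and |y − y₀| < p. (This is the condition guaranteeing that the 2-D classical QC-LDPC code defined by H can correct any p × p burst erasure.) -/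
open Matrix

theorem Hmat_of_lt_sq {p w : ℕ} (φ ψ : ZMod p → ZMod p) (ζ : ℕ → ZMod p → ZMod p)
    {ℓ : Fin (w * p ^ 2)} (hℓ : (ℓ : ℕ) < p ^ 2) (xy : Fin (p ^ 2) × Fin (p ^ 2)) :
    Hmat p w φ ψ ζ ℓ xy =
      if ((xy.1 : ℕ) : ZMod p) = ((ℓ : ℕ) : ZMod p) + ζ 0 (((ℓ : ℕ) / p : ℕ) : ZMod p) ∧
          ((xy.2 : ℕ) : ZMod p) = ((ℓ : ℕ) : ZMod p)
      then 1 else 0 := by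
  simp [Hmat, Nat.div_eq_of_lt hℓ]

theorem exists_lt_sq_natCast_eq_and_div_eq {p : ℕ} [NeZero p] (a b : ZMod p) :
    ∃ ℓ < p ^ 2, (ℓ : ZMod p) = b ∧ ((ℓ / p : ℕ) : ZMod p) = a := by
  have hp : 0 < p := Nat.pos_of_neZero p
  refine ⟨a.val * p + b.val, ?_, by simp, ?_⟩
  · nlinarith [ZMod.val_lt a, ZMod.val_lt b]
  · rw [mul_comm, Nat.mul_add_div hp, Nat.div_eq_of_lt (ZMod.val_lt b), add_zero,
      ZMod.natCast_zmod_val]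

theorem Nat.eq_of_natCast_eq_of_abs_sub_lt {p a b : ℕ} (h : (a : ZMod p) = b)
    (hab : |(a : ℤ) - b| < p) : a = b :=
  (((ZMod.natCast_eq_natCast_iff _ _ _).1 h).symm.eq_of_abs_lt hab).symm

theorem stmt_10_general (p w : ℕ) (hw1 : 1 ≤ w)
    (φ ψ : ZMod p → ZMod p)
    (ζ : ℕ → ZMod p → ZMod p) (hζ : ∀ m < w, Function.Bijective (ζ m))
    (xy₀ : Fin (p ^ 2) × Fin (p ^ 2)) :
    ∃ ℓ : Fin (w * p ^ 2), (ℓ : ℕ) < p ^ 2 ∧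
      Hmat p w φ ψ ζ ℓ xy₀ = 1 ∧
      ∀ xy : Fin (p ^ 2) × Fin (p ^ 2), xy ≠ xy₀ →
        |((xy.1 : ℕ) : ℤ) - ((xy₀.1 : ℕ) : ℤ)| < p →
        |((xy.2 : ℕ) : ℤ) - ((xy₀.2 : ℕ) : ℤ)| < p →
        Hmat p w φ ψ ζ ℓ xy = 0 := by
  have : NeZero p := ⟨by rintro rfl; exact xy₀.1.elim0⟩
  obtain ⟨a, ha⟩ := (hζ 0 hw1).surjective (((xy₀.1 : ℕ) : ZMod p) - ((xy₀.2 : ℕ) : ZMod p))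
  obtain ⟨ℓ, hℓ, hℓy, hℓa⟩ := exists_lt_sq_natCast_eq_and_div_eq a ((xy₀.2 : ℕ) : ZMod p)
  have hℓw : ℓ < w * p ^ 2 := hℓ.trans_le (Nat.le_mul_of_pos_left _ hw1)
  refine ⟨⟨ℓ, hℓw⟩, hℓ, ?_, fun xy hne hx hy => ?_⟩
  · rw [Hmat_of_lt_sq φ ψ ζ hℓ, if_pos]
    simp only [hℓy, hℓa, ha, add_sub_cancel, and_true]
  · rw [Hmat_of_lt_sq φ ψ ζ hℓ, if_neg]
    rintro ⟨hx_mod, hy_mod⟩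
    simp only [hℓy, hℓa, ha, add_sub_cancel] at hx_mod hy_mod
    exact hne (Prod.ext (Fin.ext (Nat.eq_of_natCast_eq_of_abs_sub_lt hx_mod hx))
      (Fin.ext (Nat.eq_of_natCast_eq_of_abs_sub_lt hy_mod hy)))

/-- Burst-erasure criterion of Theorem 3: for every position `(x₀, y₀)` there is a layer
`ℓ` in the first horizontal block-layer (`ℓ < p²`) whose row has a `1` at `(x₀, y₀)` and
`0` at every other position `(x, y)` with `|x − x₀| < p` and `|y − y₀| < p`; hence the
code corrects any `p × p` burst erasure. -/
theorem stmt_10 (p w : ℕ) (hp : p.Prime) (hodd : Odd p) (hw1 : 1 ≤ w) (hwp : w ≤ p)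
    (φ ψ : ZMod p → ZMod p) (hφ : Function.Bijective φ) (hψ : Function.Bijective ψ)
    (ζ : ℕ → ZMod p → ZMod p) (hζ : ∀ m < w, Function.Bijective (ζ m))
    (xy₀ : Fin (p ^ 2) × Fin (p ^ 2)) :
    ∃ ℓ : Fin (w * p ^ 2), (ℓ : ℕ) < p ^ 2 ∧
      Hmat p w φ ψ ζ ℓ xy₀ = 1 ∧
      ∀ xy : Fin (p ^ 2) × Fin (p ^ 2), xy ≠ xy₀ →
        |((xy.1 : ℕ) : ℤ) - ((xy₀.1 : ℕ) : ℤ)| < p →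
        |((xy.2 : ℕ) : ℤ) - ((xy₀.2 : ℕ) : ℤ)| < p →
        Hmat p w φ ψ ζ ℓ xy = 0 :=
  stmt_10_general p w hw1 φ ψ ζ hζ xy₀
end

section
/- Let p, δ, c, b be positive integers with (c−1)·δ < p and (b−1)·δ < p. Let α, u, v be integers with 1 ≤ |α| ≤ δ, |u| ≤ c−1 and |v| ≤ b−1. If p divides α·u and p divides α·(u+v), then u = 0 and v = 0. Consequently, for injective maps φ : {0,…,c−1} → {0,…,c−1} and ψ : {0,…,b−1} → {0,…,b−1} and block-column indices (i₀,j₀), (i₁,j₁), if p divides α·(φ(i₀) − φ(i₁)) and p divides α·((φ(i₀) − φ(i₁)) + (ψ(j₀) − ψ(j₁))), then i₀ = i₁ and j₀ = j₁. -/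
/-! Since `|α| * |u| ≤ δ (n - 1) < p`, a multiple `α u` of `p` must vanish, so `u = 0` as `α ≠ 0`.
Applied first to `u` (bounded via `c`) and then, with `u = 0`, to `v` (bounded via `b`), this gives
the first claim; the second follows by taking `u`, `v` to be differences of values of `φ`, `ψ`. -/

lemma Int.eq_zero_of_dvd_mul_of_abs_mul_lt {p α u : ℤ} (hα : α ≠ 0) (hlt : |α| * |u| < p)
    (hdvd : p ∣ α * u) : u = 0 :=
  (mul_eq_zero.mp (Int.eq_zero_of_abs_lt_dvd hdvd (abs_mul α u ▸ hlt))).resolve_left hα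

lemma Int.eq_zero_of_natCast_dvd_mul {p δ n : ℕ} (h : (n - 1) * δ < p) {α u : ℤ} (hα : α ≠ 0)
    (hαδ : |α| ≤ δ) (hu : |u| ≤ (n : ℤ) - 1) (hdvd : (p : ℤ) ∣ α * u) : u = 0 := by
  have hn : 1 ≤ n := by have := abs_nonneg u; omega
  refine Int.eq_zero_of_dvd_mul_of_abs_mul_lt hα ?_ hdvd
  calc |α| * |u| ≤ δ * ((n : ℤ) - 1) := mul_le_mul hαδ hu (abs_nonneg u) (by positivity)
    _ < p := by rw [mul_comm, ← Nat.cast_one, ← Nat.cast_sub hn]; exact_mod_cast h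

lemma Fin.abs_sub_val_le {n : ℕ} (i j : Fin n) : |((i : ℕ) : ℤ) - ((j : ℕ) : ℤ)| ≤ (n : ℤ) - 1 := by
  have := i.isLt; have := j.isLt
  rw [abs_sub_le_iff]; omega

theorem stmt_11_general (p δ c b : ℕ)
    (h1 : (c - 1) * δ < p) (h2 : (b - 1) * δ < p)
    (α : ℤ) (hα1 : 1 ≤ |α|) (hαδ : |α| ≤ (δ : ℤ)) :
    (∀ u v : ℤ, |u| ≤ (c : ℤ) - 1 → |v| ≤ (b : ℤ) - 1 →
        (p : ℤ) ∣ α * u → (p : ℤ) ∣ α * (u + v) → u = 0 ∧ v = 0) ∧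
    (∀ (φ : Fin c → Fin c) (ψ : Fin b → Fin b),
        Function.Injective φ → Function.Injective ψ →
        ∀ (i₀ i₁ : Fin c) (j₀ j₁ : Fin b),
          (p : ℤ) ∣ α * (((φ i₀ : ℕ) : ℤ) - ((φ i₁ : ℕ) : ℤ)) →
          (p : ℤ) ∣ α * ((((φ i₀ : ℕ) : ℤ) - ((φ i₁ : ℕ) : ℤ)) +
              (((ψ j₀ : ℕ) : ℤ) - ((ψ j₁ : ℕ) : ℤ))) →
          i₀ = i₁ ∧ j₀ = j₁) := by
  have hα : α ≠ 0 := abs_pos.mp hα1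
  have key : ∀ u v : ℤ, |u| ≤ (c : ℤ) - 1 → |v| ≤ (b : ℤ) - 1 →
      (p : ℤ) ∣ α * u → (p : ℤ) ∣ α * (u + v) → u = 0 ∧ v = 0 := by
    intro u v hu hv hdu hduv
    obtain rfl := Int.eq_zero_of_natCast_dvd_mul h1 hα hαδ hu hdu
    rw [zero_add] at hduv
    exact ⟨rfl, Int.eq_zero_of_natCast_dvd_mul h2 hα hαδ hv hduv⟩
  refine ⟨key, fun φ ψ hφ hψ i₀ i₁ j₀ j₁ hdu hduv => ?_⟩
  obtain ⟨hu, hv⟩ := key _ _ (Fin.abs_sub_val_le _ _) (Fin.abs_sub_val_le _ _) hdu hduv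
  exact ⟨hφ (Fin.ext (by exact_mod_cast sub_eq_zero.mp hu)),
    hψ (Fin.ext (by exact_mod_cast sub_eq_zero.mp hv))⟩

/-- Arithmetic core of Theorem 4: if `(c−1)δ < p` and `(b−1)δ < p`, then for integers
`α, u, v` with `1 ≤ |α| ≤ δ`, `|u| ≤ c−1`, `|v| ≤ b−1`, the divisibilities
`p ∣ α·u` and `p ∣ α·(u+v)` force `u = 0` and `v = 0`; consequently, for injective maps
`φ : {0,…,c−1} → {0,…,c−1}` and `ψ : {0,…,b−1} → {0,…,b−1}`, the two 4-cycle
divisibility conditions force the block-column indices to coincide. -/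
theorem stmt_11 (p δ c b : ℕ) (hp : 0 < p) (hδ : 0 < δ) (hc : 0 < c) (hb : 0 < b)
    (h1 : (c - 1) * δ < p) (h2 : (b - 1) * δ < p)
    (α : ℤ) (hα1 : 1 ≤ |α|) (hαδ : |α| ≤ (δ : ℤ)) :
    (∀ u v : ℤ, |u| ≤ (c : ℤ) - 1 → |v| ≤ (b : ℤ) - 1 →
        (p : ℤ) ∣ α * u → (p : ℤ) ∣ α * (u + v) → u = 0 ∧ v = 0) ∧
    (∀ (φ : Fin c → Fin c) (ψ : Fin b → Fin b),
        Function.Injective φ → Function.Injective ψ →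
        ∀ (i₀ i₁ : Fin c) (j₀ j₁ : Fin b),
          (p : ℤ) ∣ α * (((φ i₀ : ℕ) : ℤ) - ((φ i₁ : ℕ) : ℤ)) →
          (p : ℤ) ∣ α * ((((φ i₀ : ℕ) : ℤ) - ((φ i₁ : ℕ) : ℤ)) +
              (((ψ j₀ : ℕ) : ℤ) - ((ψ j₁ : ℕ) : ℤ))) →
          i₀ = i₁ ∧ j₀ = j₁) :=
  stmt_11_general p δ c b h1 h2 α hα1 hαδ
end

section
/- Let n ≥ 2, d ≥ 1, δ ≥ 2 and k ≤ n·d² be integers, and let B = B(n,k,d,δ) be the generalized Behrend set, assumed nonempty, with maximum element M. Let p be a positive integer with p ≥ δ·M + 1. Let a₀, a₁, b₀, b₁ ∈ B and let α be an integer with 1 ≤ |α| ≤ δ. If p divides α·(a₀ − a₁) and p divides α·((a₀ − a₁) + (b₀ − b₁)), then a₀ = a₁ and b₀ = b₁. -/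
/-- The generalized Behrend set `B(n, k, d, δ)`: natural numbers of the form
`y = Σ_{i=0}^{n−1} y_i (δd+1)^i` with digits `0 ≤ y_i ≤ d` and `Σ y_i² = k`. -/
def behrendSet (n k d δ : ℕ) : Set ℕ :=
  { y | ∃ f : Fin n → ℕ, (∀ i, f i ≤ d) ∧ (∑ i, (f i) ^ 2 = k) ∧
      y = ∑ i : Fin n, f i * (δ * d + 1) ^ (i : ℕ) }

lemma key (δ M p : ℕ) (hpM : δ * M + 1 ≤ p) (α t : ℤ) (hα1 : 1 ≤ |α|)
    (hαδ : |α| ≤ (δ : ℤ)) (ht : |t| ≤ (M : ℤ)) (hdiv : (p : ℤ) ∣ α * t) : t = 0 := by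
  have h : |α * t| < (p : ℤ) := by
    rw [abs_mul]
    calc |α| * |t| ≤ (δ : ℤ) * (M : ℤ) :=
          mul_le_mul hαδ ht (abs_nonneg _) (by positivity)
      _ < p := by exact_mod_cast hpM
  have := Int.eq_zero_of_abs_lt_dvd hdiv h
  rcases mul_eq_zero.mp this with h0 | h0
  · simp [h0] at hα1
  · exact h0

/-- 4-cycle part of Theorem 5: with `p ≥ δ·M + 1` where `M = max B(n,k,d,δ)`, elements
`a₀, a₁, b₀, b₁` of the generalized Behrend set and `1 ≤ |α| ≤ δ`, the divisibilities
`p ∣ α(a₀ − a₁)` and `p ∣ α((a₀ − a₁) + (b₀ − b₁))` force `a₀ = a₁` and `b₀ = b₁`. -/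
theorem stmt_12 (n d δ k : ℕ) (hn : 2 ≤ n) (hd : 1 ≤ d) (hδ : 2 ≤ δ) (hk : k ≤ n * d ^ 2)
    (M : ℕ) (hM : M ∈ behrendSet n k d δ) (hMmax : ∀ y ∈ behrendSet n k d δ, y ≤ M)
    (p : ℕ) (hp : 0 < p) (hpM : δ * M + 1 ≤ p)
    (a₀ a₁ b₀ b₁ : ℕ)
    (ha₀ : a₀ ∈ behrendSet n k d δ) (ha₁ : a₁ ∈ behrendSet n k d δ)
    (hb₀ : b₀ ∈ behrendSet n k d δ) (hb₁ : b₁ ∈ behrendSet n k d δ)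
    (α : ℤ) (hα1 : 1 ≤ |α|) (hαδ : |α| ≤ (δ : ℤ))
    (hdiv1 : (p : ℤ) ∣ α * ((a₀ : ℤ) - (a₁ : ℤ)))
    (hdiv2 : (p : ℤ) ∣ α * (((a₀ : ℤ) - (a₁ : ℤ)) + ((b₀ : ℤ) - (b₁ : ℤ)))) :
    a₀ = a₁ ∧ b₀ = b₁ := by
  have habs : ∀ x y : ℕ, x ∈ behrendSet n k d δ → y ∈ behrendSet n k d δ →
      |(x : ℤ) - (y : ℤ)| ≤ (M : ℤ) := by
    intro x y hx hy
    have hx' := hMmax x hx; have hy' := hMmax y hy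
    rw [abs_sub_le_iff]
    constructor <;> [skip; skip] <;>
      · have : (0:ℤ) ≤ (M:ℤ) := by positivity
        omega
  have h1 : (a₀ : ℤ) - a₁ = 0 := key δ M p hpM α _ hα1 hαδ (habs _ _ ha₀ ha₁) hdiv1
  have h2 : ((a₀ : ℤ) - a₁) + ((b₀ : ℤ) - b₁) = 0 := by
    refine key δ M p hpM α _ hα1 hαδ ?_ hdiv2
    rw [h1, zero_add]; exact habs _ _ hb₀ hb₁
  constructor <;> omega
end

section
/- Let n ≥ 2, d ≥ 1, δ ≥ 2 and k ≤ n·d² be integers, and let B = B(n,k,d,δ) be the generalized Behrend set, assumed nonempty, with maximum element M. Let p be a positive integer with p ≥ δ·M + 1. Let a₀, a₁, a₂, b₀, b₁, b₂ ∈ B and let α, β be integers with α ≠ 0, β ≠ 0, α + β ≠ 0, |α| ≤ δ, |β| ≤ δ and |α + β| ≤ δ. If p divides (α+β)·a₀ − β·a₂ − α·a₁ and p divides (α+β)·(a₀ + b₀) − β·(a₂ + b₂) − α·(a₁ + b₁), then a₀ = a₁ = a₂ and b₀ = b₁ = b₂. -/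
/-!
A 6-cycle forces a relation `(α+β)·x = α·y + β·z` among elements of the Behrend set, first
modulo `p` and then, because the coefficients sum to zero and `p` exceeds `δ·max B`, over `ℤ`.
Since `δ·d` is smaller than the base `δd+1`, the relation passes to the digit vectors. Finally
the identity `‖αv + βw‖² = (α+β)(α‖v‖² + β‖w‖²) - αβ‖v - w‖²`, together with the fact that
all digit vectors of `B` have squared norm `k`, gives `αβ‖v - w‖² = 0`, whatever the signs of
`α` and `β`.
-/

section

variable {R : Type*} [CommRing R] [LinearOrder R] [IsStrictOrderedRing R]

theorem abs_add_mul_sub_mul_sub_mul_le {α β δ x y z M : R}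
    (hα : |α| ≤ δ) (hβ : |β| ≤ δ) (hαβ : |α + β| ≤ δ)
    (hx₀ : 0 ≤ x) (hx : x ≤ M) (hy₀ : 0 ≤ y) (hy : y ≤ M) (hz₀ : 0 ≤ z) (hz : z ≤ M) :
    |(α + β) * x - α * y - β * z| ≤ δ * M := by
  rw [abs_le] at hα hβ hαβ ⊢
  constructor <;>
  · rcases le_total 0 α with hα' | hα' <;> rcases le_total 0 β with hβ' | hβ' <;>
      rcases le_total 0 (α + β) with hs | hs <;> nlinarith

theorem eq_and_eq_of_add_mul_eq_of_sum_sq_eq {ι : Type*} [Fintype ι] {α β : R}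
    (hα : α ≠ 0) (hβ : β ≠ 0) (hαβ : α + β ≠ 0) {u v w : ι → R}
    (h : ∀ i, (α + β) * u i = α * v i + β * w i)
    (hv : ∑ i, v i ^ 2 = ∑ i, u i ^ 2) (hw : ∑ i, w i ^ 2 = ∑ i, u i ^ 2) :
    u = v ∧ v = w := by
  have hterm : ∀ i, α * β * (v i - w i) ^ 2
      = (α + β) * (α * v i ^ 2 + β * w i ^ 2) - (α + β) ^ 2 * u i ^ 2 := fun i => by
    rw [← mul_pow, h i]; ring
  have hsum : α * β * ∑ i, (v i - w i) ^ 2 = 0 := by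
    rw [Finset.mul_sum, Finset.sum_congr rfl fun i _ => hterm i, Finset.sum_sub_distrib,
      ← Finset.mul_sum, ← Finset.mul_sum, Finset.sum_add_distrib, ← Finset.mul_sum,
      ← Finset.mul_sum, hv, hw]
    ring
  have hsq : ∑ i, (v i - w i) ^ 2 = 0 := by simpa [hα, hβ] using hsum
  have hvw : v = w := funext fun i => sub_eq_zero.1 <| pow_eq_zero_iff two_ne_zero |>.1 <|
    (Finset.sum_eq_zero_iff_of_nonneg fun i _ => sq_nonneg _).1 hsq i (Finset.mem_univ i)
  refine ⟨funext fun i => mul_left_cancel₀ hαβ ?_, hvw⟩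
  rw [h i, hvw, add_mul]

end

theorem Int.eq_zero_of_sum_mul_pow_eq_zero {B : ℤ} :
    ∀ {n : ℕ} {c : Fin n → ℤ}, (∀ i, |c i| < B) → ∑ i, c i * B ^ (i : ℕ) = 0 → c = 0
  | 0, _, _, _ => funext nofun
  | m + 1, c, hc, hsum => by
    have hsplit : ∑ i, c i * B ^ (i : ℕ) = c 0 + B * ∑ i : Fin m, c i.succ * B ^ (i : ℕ) := by
      simp only [Fin.sum_univ_succ, Finset.mul_sum, Fin.val_succ, Fin.val_zero, pow_succ]
      ring_nf
    rw [hsplit] at hsum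
    have h0 : c 0 = 0 :=
      Int.eq_zero_of_abs_lt_dvd ⟨-∑ i : Fin m, c i.succ * B ^ (i : ℕ), by linarith⟩ (hc 0)
    have hB : B ≠ 0 := ((abs_nonneg _).trans_lt (hc 0)).ne'
    have htail : c ∘ Fin.succ = 0 := Int.eq_zero_of_sum_mul_pow_eq_zero (fun i => hc i.succ) <| by
      simpa [h0, hB] using hsum
    funext i
    cases i using Fin.cases with
    | zero => exact h0
    | succ j => exact congrFun htail j

theorem eq_and_eq_of_mem_behrendSet {n k d δ x y z : ℕ} (hx : x ∈ behrendSet n k d δ)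
    (hy : y ∈ behrendSet n k d δ) (hz : z ∈ behrendSet n k d δ) {α β : ℤ}
    (hα : α ≠ 0) (hβ : β ≠ 0) (hαβ : α + β ≠ 0)
    (hαδ : |α| ≤ δ) (hβδ : |β| ≤ δ) (hαβδ : |α + β| ≤ δ)
    (hrel : (α + β) * x = α * y + β * z) :
    x = y ∧ y = z := by
  obtain ⟨f, hfd, hfk, rfl⟩ := hx
  obtain ⟨g, hgd, hgk, rfl⟩ := hy
  obtain ⟨e, hed, hek, rfl⟩ := hz
  have hdigits : (fun i => (α + β) * f i - α * g i - β * e i) = 0 := by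
    refine Int.eq_zero_of_sum_mul_pow_eq_zero (B := δ * d + 1) (fun i => ?_) ?_
    · have := abs_add_mul_sub_mul_sub_mul_le (M := (d : ℤ)) hαδ hβδ hαβδ
        (Nat.cast_nonneg (f i)) (by exact_mod_cast hfd i) (Nat.cast_nonneg (g i))
        (by exact_mod_cast hgd i) (Nat.cast_nonneg (e i)) (by exact_mod_cast hed i)
      linarith
    · push_cast at hrel
      simp only [sub_mul, Finset.sum_sub_distrib, mul_assoc, ← Finset.mul_sum]
      linear_combination hrel
  have hcast : ∀ {u v : Fin n → ℕ}, ∑ i, u i ^ 2 = ∑ i, v i ^ 2 →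
      ∑ i, ((u i : ℤ)) ^ 2 = ∑ i, ((v i : ℤ)) ^ 2 := fun h => by exact_mod_cast h
  obtain ⟨hfg, hge⟩ := eq_and_eq_of_add_mul_eq_of_sum_sq_eq hα hβ hαβ
    (fun i => by linear_combination (by simpa using congrFun hdigits i :
      (α + β) * f i - α * g i - β * e i = 0))
    (hcast (hgk.trans hfk.symm)) (hcast (hek.trans hfk.symm))
  obtain rfl := Nat.cast_injective.comp_left hfg
  obtain rfl := Nat.cast_injective.comp_left hge
  exact ⟨rfl, rfl⟩

theorem stmt_13_general (n d δ k : ℕ)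
    (M : ℕ) (hMmax : ∀ y ∈ behrendSet n k d δ, y ≤ M)
    (p : ℕ) (hpM : δ * M + 1 ≤ p)
    (a₀ a₁ a₂ b₀ b₁ b₂ : ℕ)
    (ha₀ : a₀ ∈ behrendSet n k d δ) (ha₁ : a₁ ∈ behrendSet n k d δ)
    (ha₂ : a₂ ∈ behrendSet n k d δ)
    (hb₀ : b₀ ∈ behrendSet n k d δ) (hb₁ : b₁ ∈ behrendSet n k d δ)
    (hb₂ : b₂ ∈ behrendSet n k d δ)
    (α β : ℤ) (hα : α ≠ 0) (hβ : β ≠ 0) (hαβ : α + β ≠ 0)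
    (hαδ : |α| ≤ (δ : ℤ)) (hβδ : |β| ≤ (δ : ℤ)) (hαβδ : |α + β| ≤ (δ : ℤ))
    (hdiv1 : (p : ℤ) ∣ (α + β) * (a₀ : ℤ) - β * (a₂ : ℤ) - α * (a₁ : ℤ))
    (hdiv2 : (p : ℤ) ∣ (α + β) * ((a₀ : ℤ) + (b₀ : ℤ)) - β * ((a₂ : ℤ) + (b₂ : ℤ)) -
        α * ((a₁ : ℤ) + (b₁ : ℤ))) :
    (a₀ = a₁ ∧ a₁ = a₂) ∧ (b₀ = b₁ ∧ b₁ = b₂) := by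
  have hle : ∀ y ∈ behrendSet n k d δ, (y : ℤ) ≤ M := fun y hy => by exact_mod_cast hMmax y hy
  have hp : (δ : ℤ) * M < p := by exact_mod_cast hpM
  have hsix : ∀ {x y z : ℕ}, x ∈ behrendSet n k d δ → y ∈ behrendSet n k d δ →
      z ∈ behrendSet n k d δ → (p : ℤ) ∣ (α + β) * x - β * z - α * y → x = y ∧ y = z := by
    intro x y z hx hy hz hdvd
    rw [sub_right_comm] at hdvd
    have hbound := abs_add_mul_sub_mul_sub_mul_le hαδ hβδ hαβδ (Nat.cast_nonneg x) (hle x hx)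
      (Nat.cast_nonneg y) (hle y hy) (Nat.cast_nonneg z) (hle z hz)
    have hzero := Int.eq_zero_of_abs_lt_dvd hdvd (hbound.trans_lt hp)
    exact eq_and_eq_of_mem_behrendSet hx hy hz hα hβ hαβ hαδ hβδ hαβδ (by linear_combination hzero)
  refine ⟨hsix ha₀ ha₁ ha₂ hdiv1, hsix hb₀ hb₁ hb₂ ?_⟩
  convert Int.dvd_sub hdiv2 hdiv1 using 1
  ring

/-- 6-cycle part of Theorem 5: with `p ≥ δ·M + 1` where `M = max B(n,k,d,δ)`, elements
`a₀, a₁, a₂, b₀, b₁, b₂` of the generalized Behrend set and nonzero `α, β, α+β` of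
absolute value at most `δ`, the divisibilities `p ∣ (α+β)a₀ − βa₂ − αa₁` and
`p ∣ (α+β)(a₀+b₀) − β(a₂+b₂) − α(a₁+b₁)` force `a₀ = a₁ = a₂` and `b₀ = b₁ = b₂`. -/
theorem stmt_13 (n d δ k : ℕ) (hn : 2 ≤ n) (hd : 1 ≤ d) (hδ : 2 ≤ δ) (hk : k ≤ n * d ^ 2)
    (M : ℕ) (hM : M ∈ behrendSet n k d δ) (hMmax : ∀ y ∈ behrendSet n k d δ, y ≤ M)
    (p : ℕ) (hp : 0 < p) (hpM : δ * M + 1 ≤ p)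
    (a₀ a₁ a₂ b₀ b₁ b₂ : ℕ)
    (ha₀ : a₀ ∈ behrendSet n k d δ) (ha₁ : a₁ ∈ behrendSet n k d δ)
    (ha₂ : a₂ ∈ behrendSet n k d δ)
    (hb₀ : b₀ ∈ behrendSet n k d δ) (hb₁ : b₁ ∈ behrendSet n k d δ)
    (hb₂ : b₂ ∈ behrendSet n k d δ)
    (α β : ℤ) (hα : α ≠ 0) (hβ : β ≠ 0) (hαβ : α + β ≠ 0)
    (hαδ : |α| ≤ (δ : ℤ)) (hβδ : |β| ≤ (δ : ℤ)) (hαβδ : |α + β| ≤ (δ : ℤ))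
    (hdiv1 : (p : ℤ) ∣ (α + β) * (a₀ : ℤ) - β * (a₂ : ℤ) - α * (a₁ : ℤ))
    (hdiv2 : (p : ℤ) ∣ (α + β) * ((a₀ : ℤ) + (b₀ : ℤ)) - β * ((a₂ : ℤ) + (b₂ : ℤ)) -
        α * ((a₁ : ℤ) + (b₁ : ℤ))) :
    (a₀ = a₁ ∧ a₁ = a₂) ∧ (b₀ = b₁ ∧ b₁ = b₂) :=
  stmt_13_general n d δ k M hMmax p hpM a₀ a₁ a₂ b₀ b₁ b₂ ha₀ ha₁ ha₂ hb₀ hb₁ hb₂ α β hα hβ hαβ hαδ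
    hβδ hαβδ hdiv1 hdiv2
end

section
/- Let p be an odd prime and let W₁, W₂ ⊆ {0,…,p−1} be nonempty disjoint sets of horizontal block-layer indices. Let H⁽¹⁾ be the submatrix of H consisting of the rows ℓ with ⌊ℓ/p²⌋ ∈ W₁ and H⁽²⁾ the submatrix consisting of the rows ℓ with ⌊ℓ/p²⌋ ∈ W₂, both viewed over GF(2) = ZMod 2. Then the product H⁽¹⁾ · (H⁽²⁾)ᵀ over ZMod 2 is the all-ones matrix; in particular its rank equals 1, so the entanglement-assisted quantum LDPC code built from the pair (H⁽¹⁾, H⁽²⁾) requires exactly one ebit. -/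
/-!
Write a position `(x, y)` through its block and offset digits `(⌊x/p⌋, x mod p)` and
`(⌊y/p⌋, y mod p)` in `ZMod p`. A layer `ℓ` is then cut out by two equations, with
coefficient `m = ⌊ℓ/p²⌋` in front of `φ(⌊x/p⌋)` and `φ(⌊x/p⌋) + ψ(⌊y/p⌋)`. Subtracting the
equations of two layers with `m₁ ≠ m₂` leaves `(m₁ - m₂) φ(⌊x/p⌋)` and `(m₁ - m₂) ψ(⌊y/p⌋)`
equal to constants; since `ZMod p` is a field and `φ`, `ψ` are bijective this fixes both block
digits, and then either layer fixes the offsets. So two layers from different block-layers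
share exactly one position, every entry of `H⁽¹⁾ (H⁽²⁾)ᵀ` is `1`, and an all-ones matrix
with nonempty index types has rank `1`.
-/

open Matrix

open Function

theorem Matrix.rank_of_const_one {m n R : Type*} [Fintype n] [CommSemiring R]
    [StrongRankCondition R] [Nonempty m] [Nonempty n] :
    (of fun (_ : m) (_ : n) => (1 : R)).rank = 1 := by
  refine le_antisymm ?_ ?_
  · have : (of fun (_ : m) (_ : n) => (1 : R)) = vecMulVec 1 1 := by
      ext; simp [vecMulVec]
    exact this ▸ rank_vecMulVec_le _ _
  · obtain ⟨i⟩ := ‹Nonempty m›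
    obtain ⟨j⟩ := ‹Nonempty n›
    calc 1 = (1 : Matrix Unit Unit R).rank := by simp [rank_one]
      _ = ((of fun (_ : m) (_ : n) => (1 : R)).submatrix (fun _ => i) (fun _ => j)).rank := by
        congr 1
      _ ≤ _ := rank_submatrix_le _ _ _

theorem Fintype.sum_ite_mul_ite_eq_one_of_existsUnique {κ R : Type*} [Fintype κ]
    [NonAssocSemiring R] {P Q : κ → Prop} [DecidablePred P] [DecidablePred Q]
    (h : ∃! k, P k ∧ Q k) :
    ∑ k, (if P k then (1 : R) else 0) * (if Q k then 1 else 0) = 1 := by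
  obtain ⟨k, ⟨hPk, hQk⟩, huniq⟩ := h
  rw [Finset.sum_eq_single k]
  · simp [hPk, hQk]
  · intro k' _ hk'
    by_cases hP : P k' <;> by_cases hQ : Q k' <;> simp_all
  · simp

section CommonPoint

variable {F : Type*} (φ ψ : F → F)

def OnLayer [CommRing F] (c z m : F) (u v : F × F) : Prop :=
  u.2 = c + z + m * (φ u.1 + ψ v.1) ∧ v.2 = c + m * φ u.1

instance [CommRing F] [DecidableEq F] (c z m : F) (u v : F × F) :
    Decidable (OnLayer φ ψ c z m u v) :=
  inferInstanceAs (Decidable (_ ∧ _))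

variable [Field F] {φ ψ} {c₁ z₁ m₁ c₂ z₂ m₂ : F}

theorem onLayer_and_onLayer_iff (hm : m₁ ≠ m₂) {u v : F × F} :
    OnLayer φ ψ c₁ z₁ m₁ u v ∧ OnLayer φ ψ c₂ z₂ m₂ u v ↔
      OnLayer φ ψ c₁ z₁ m₁ u v ∧ φ u.1 = (c₂ - c₁) / (m₁ - m₂) ∧
        ψ v.1 = (z₂ - z₁) / (m₁ - m₂) := by
  have hd : m₁ - m₂ ≠ 0 := sub_ne_zero.2 hm
  simp only [OnLayer, eq_div_iff hd]
  constructor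
  · rintro ⟨⟨hu₁, hv₁⟩, hu₂, hv₂⟩
    exact ⟨⟨hu₁, hv₁⟩, by linear_combination hv₂ - hv₁,
      by linear_combination hu₂ - hu₁ - hv₂ + hv₁⟩
  · rintro ⟨⟨hu₁, hv₁⟩, hφ, hψ⟩
    exact ⟨⟨hu₁, hv₁⟩, by linear_combination hu₁ + hφ + hψ, by linear_combination hv₁ + hφ⟩

theorem existsUnique_onLayer_and_onLayer (hφ : Bijective φ) (hψ : Bijective ψ)
    (hm : m₁ ≠ m₂) :
    ∃! uv : (F × F) × (F × F),
      OnLayer φ ψ c₁ z₁ m₁ uv.1 uv.2 ∧ OnLayer φ ψ c₂ z₂ m₂ uv.1 uv.2 := by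
  simp_rw [onLayer_and_onLayer_iff hm]
  obtain ⟨a, ha⟩ := hφ.2 ((c₂ - c₁) / (m₁ - m₂))
  obtain ⟨b, hb⟩ := hψ.2 ((z₂ - z₁) / (m₁ - m₂))
  refine ⟨((a, c₁ + z₁ + m₁ * (φ a + ψ b)), (b, c₁ + m₁ * φ a)), ⟨⟨rfl, rfl⟩, ha, hb⟩, ?_⟩
  rintro ⟨⟨a', X⟩, ⟨b', Y⟩⟩ ⟨⟨hX, hY⟩, ha', hb'⟩
  obtain rfl : a' = a := hφ.1 (ha'.trans ha.symm)
  obtain rfl : b' = b := hψ.1 (hb'.trans hb.symm)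
  dsimp only at hX hY
  rw [hX, hY]

end CommonPoint

def blockDigits (p : ℕ) (x : Fin (p ^ 2)) : ZMod p × ZMod p :=
  (((x : ℕ) / p : ℕ), ((x : ℕ) : ZMod p))

theorem blockDigits_bijective (p : ℕ) [NeZero p] : Bijective (blockDigits p) := by
  rw [Fintype.bijective_iff_injective_and_card]
  refine ⟨fun x y h => ?_, by simp [sq]⟩
  simp only [blockDigits, Prod.mk.injEq, ZMod.natCast_eq_natCast_iff'] at h
  have hx : (x : ℕ) / p < p := Nat.div_lt_of_lt_mul (by simpa [sq] using x.2)
  have hy : (y : ℕ) / p < p := Nat.div_lt_of_lt_mul (by simpa [sq] using y.2)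
  rw [Nat.mod_eq_of_lt hx, Nat.mod_eq_of_lt hy] at h
  ext
  rw [← Nat.div_add_mod x p, ← Nat.div_add_mod y p, h.1, h.2]

theorem Hmat_apply (p w : ℕ) (φ ψ : ZMod p → ZMod p) (ζ : ℕ → ZMod p → ZMod p)
    (ℓ : Fin (w * p ^ 2)) (xy : Fin (p ^ 2) × Fin (p ^ 2)) :
    Hmat p w φ ψ ζ ℓ xy =
      if OnLayer φ ψ (ℓ : ℕ) (ζ (ℓ / p ^ 2) ((ℓ / p : ℕ) : ZMod p)) ((ℓ / p ^ 2 : ℕ) : ZMod p)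
        (blockDigits p xy.1) (blockDigits p xy.2) then 1 else 0 := rfl

theorem Hmat_mul_transpose_apply_of_ne {p w : ℕ} [Fact p.Prime] {φ ψ : ZMod p → ZMod p}
    (hφ : Bijective φ) (hψ : Bijective ψ) (ζ : ℕ → ZMod p → ZMod p) (ℓ₁ ℓ₂ : Fin (w * p ^ 2))
    (h : ((ℓ₁ / p ^ 2 : ℕ) : ZMod p) ≠ ((ℓ₂ / p ^ 2 : ℕ) : ZMod p)) :
    (Hmat p w φ ψ ζ * (Hmat p w φ ψ ζ)ᵀ) ℓ₁ ℓ₂ = 1 := by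
  have hdigits := (blockDigits_bijective p).prodMap (blockDigits_bijective p)
  have key := existsUnique_onLayer_and_onLayer hφ hψ h (c₁ := ((ℓ₁ : ℕ) : ZMod p))
    (c₂ := ((ℓ₂ : ℕ) : ZMod p)) (z₁ := ζ (ℓ₁ / p ^ 2) ((ℓ₁ / p : ℕ) : ZMod p))
    (z₂ := ζ (ℓ₂ / p ^ 2) ((ℓ₂ / p : ℕ) : ZMod p))
  rw [hdigits.existsUnique_iff] at key
  simp only [mul_apply, transpose_apply, Hmat_apply]
  exact Fintype.sum_ite_mul_ite_eq_one_of_existsUnique key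

theorem natCast_div_sq_ne_of_ne {p : ℕ} {ℓ₁ ℓ₂ : Fin (p * p ^ 2)}
    (h : (ℓ₁ : ℕ) / p ^ 2 ≠ ℓ₂ / p ^ 2) :
    ((ℓ₁ / p ^ 2 : ℕ) : ZMod p) ≠ ((ℓ₂ / p ^ 2 : ℕ) : ZMod p) := by
  have hlt (ℓ : Fin (p * p ^ 2)) : (ℓ : ℕ) / p ^ 2 < p :=
    Nat.div_lt_of_lt_mul (ℓ.2.trans_eq (mul_comm _ _))
  rwa [Ne, ZMod.natCast_eq_natCast_iff', Nat.mod_eq_of_lt (hlt ℓ₁), Nat.mod_eq_of_lt (hlt ℓ₂)]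

theorem Hmat_submatrix_mul_transpose_of_disjoint {p : ℕ} [Fact p.Prime] {φ ψ : ZMod p → ZMod p}
    (hφ : Bijective φ) (hψ : Bijective ψ) (ζ : ℕ → ZMod p → ZMod p) {W₁ W₂ : Finset ℕ}
    (hdisj : Disjoint W₁ W₂) :
    (Hmat p p φ ψ ζ).submatrix ((↑) : {ℓ : Fin (p * p ^ 2) // (ℓ : ℕ) / p ^ 2 ∈ W₁} → _) id *
        ((Hmat p p φ ψ ζ).submatrix
          ((↑) : {ℓ : Fin (p * p ^ 2) // (ℓ : ℕ) / p ^ 2 ∈ W₂} → _) id)ᵀ =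
      of fun _ _ => 1 := by
  ext ℓ₁ ℓ₂
  refine Hmat_mul_transpose_apply_of_ne hφ hψ ζ ℓ₁.1 ℓ₂.1 (natCast_div_sq_ne_of_ne ?_)
  exact fun h => Finset.disjoint_left.mp hdisj ℓ₁.2 (h ▸ ℓ₂.2)

theorem nonempty_blockLayer {p : ℕ} (hp : 0 < p) {W : Finset ℕ} {m : ℕ} (hm : m ∈ W)
    (hmp : m < p) : Nonempty {ℓ : Fin (p * p ^ 2) // (ℓ : ℕ) / p ^ 2 ∈ W} :=
  ⟨⟨⟨m * p ^ 2, Nat.mul_lt_mul_of_pos_right hmp (by positivity)⟩, by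
    simpa [Nat.mul_div_cancel _ (by positivity : 0 < p ^ 2)]⟩⟩

theorem stmt_14_general (p : ℕ) (hp : p.Prime)
    (φ ψ : ZMod p → ZMod p) (hφ : Function.Bijective φ) (hψ : Function.Bijective ψ)
    (ζ : ℕ → ZMod p → ZMod p)
    (W₁ W₂ : Finset ℕ) (hW₁ : W₁.Nonempty) (hW₂ : W₂.Nonempty)
    (hW₁p : ∀ m ∈ W₁, m < p) (hW₂p : ∀ m ∈ W₂, m < p)
    (hdisj : Disjoint W₁ W₂) :
    (Matrix.of (fun (ℓ₁ : {ℓ : Fin (p * p ^ 2) // (ℓ : ℕ) / p ^ 2 ∈ W₁})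
          (xy : Fin (p ^ 2) × Fin (p ^ 2)) => Hmat p p φ ψ ζ ℓ₁.1 xy) *
        (Matrix.of (fun (ℓ₂ : {ℓ : Fin (p * p ^ 2) // (ℓ : ℕ) / p ^ 2 ∈ W₂})
          (xy : Fin (p ^ 2) × Fin (p ^ 2)) => Hmat p p φ ψ ζ ℓ₂.1 xy))ᵀ =
      Matrix.of fun _ _ => (1 : ZMod 2)) ∧
    (Matrix.of (fun (ℓ₁ : {ℓ : Fin (p * p ^ 2) // (ℓ : ℕ) / p ^ 2 ∈ W₁})
          (xy : Fin (p ^ 2) × Fin (p ^ 2)) => Hmat p p φ ψ ζ ℓ₁.1 xy) *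
        (Matrix.of (fun (ℓ₂ : {ℓ : Fin (p * p ^ 2) // (ℓ : ℕ) / p ^ 2 ∈ W₂})
          (xy : Fin (p ^ 2) × Fin (p ^ 2)) => Hmat p p φ ψ ζ ℓ₂.1 xy))ᵀ).rank = 1 := by
  have : Fact p.Prime := ⟨hp⟩
  have hones := Hmat_submatrix_mul_transpose_of_disjoint hφ hψ ζ hdisj
  obtain ⟨m₁, hm₁⟩ := hW₁
  obtain ⟨m₂, hm₂⟩ := hW₂
  have := nonempty_blockLayer hp.pos hm₁ (hW₁p m₁ hm₁)
  have := nonempty_blockLayer hp.pos hm₂ (hW₂p m₂ hm₂)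
  exact ⟨hones, (congrArg rank hones).trans rank_of_const_one⟩

/-- Key computation in Theorem 6 (first family of 2-D EA quantum LDPC codes): for
nonempty disjoint sets `W₁, W₂` of horizontal block-layer indices, the product
`H⁽¹⁾ · (H⁽²⁾)ᵀ` over GF(2) of the corresponding row-submatrices of `H` is the
all-ones matrix, and its rank equals `1`; hence a single ebit suffices. -/
theorem stmt_14 (p : ℕ) (hp : p.Prime) (hodd : Odd p)
    (φ ψ : ZMod p → ZMod p) (hφ : Function.Bijective φ) (hψ : Function.Bijective ψ)
    (ζ : ℕ → ZMod p → ZMod p) (hζ : ∀ m < p, Function.Bijective (ζ m))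
    (W₁ W₂ : Finset ℕ) (hW₁ : W₁.Nonempty) (hW₂ : W₂.Nonempty)
    (hW₁p : ∀ m ∈ W₁, m < p) (hW₂p : ∀ m ∈ W₂, m < p)
    (hdisj : Disjoint W₁ W₂) :
    (Matrix.of (fun (ℓ₁ : {ℓ : Fin (p * p ^ 2) // (ℓ : ℕ) / p ^ 2 ∈ W₁})
          (xy : Fin (p ^ 2) × Fin (p ^ 2)) => Hmat p p φ ψ ζ ℓ₁.1 xy) *
        (Matrix.of (fun (ℓ₂ : {ℓ : Fin (p * p ^ 2) // (ℓ : ℕ) / p ^ 2 ∈ W₂})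
          (xy : Fin (p ^ 2) × Fin (p ^ 2)) => Hmat p p φ ψ ζ ℓ₂.1 xy))ᵀ =
      Matrix.of fun _ _ => (1 : ZMod 2)) ∧
    (Matrix.of (fun (ℓ₁ : {ℓ : Fin (p * p ^ 2) // (ℓ : ℕ) / p ^ 2 ∈ W₁})
          (xy : Fin (p ^ 2) × Fin (p ^ 2)) => Hmat p p φ ψ ζ ℓ₁.1 xy) *
        (Matrix.of (fun (ℓ₂ : {ℓ : Fin (p * p ^ 2) // (ℓ : ℕ) / p ^ 2 ∈ W₂})
          (xy : Fin (p ^ 2) × Fin (p ^ 2)) => Hmat p p φ ψ ζ ℓ₂.1 xy))ᵀ).rank = 1 :=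
  stmt_14_general p hp φ ψ hφ hψ ζ W₁ W₂ hW₁ hW₂ hW₁p hW₂p hdisj
end

section
/- For the binary matrix H described in the context (p an odd prime, 1 ≤ w ≤ p), the Gram matrix G = H · Hᵀ over GF(2) = ZMod 2 is the w·p² × w·p² matrix with G(ℓ₁,ℓ₂) = 1 if ℓ₁ = ℓ₂, G(ℓ₁,ℓ₂) = 1 if ℓ₁ ≠ ℓ₂ and ⌊ℓ₁/p²⌋ ≠ ⌊ℓ₂/p²⌋, and G(ℓ₁,ℓ₂) = 0 if ℓ₁ ≠ ℓ₂ and ⌊ℓ₁/p²⌋ = ⌊ℓ₂/p²⌋; and the rank of G over ZMod 2 equals p² + (w−1)(p²−1). Hence the number of ebits required by the entanglement-assisted quantum LDPC code constructed from the single classical code with parity-check matrix H equals p² + (w−1)(p²−1). -/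
open Matrix

section Aux

variable {p : ℕ}

private lemma castFinBij [NeZero p] :
    Function.Bijective (fun i : Fin p => ((i : ℕ) : ZMod p)) := by
  rw [Fintype.bijective_iff_injective_and_card]
  refine ⟨fun i j h => ?_, by simp⟩
  simp only [ZMod.natCast_eq_natCast_iff] at h
  exact Fin.ext (Nat.ModEq.eq_of_lt_of_lt h i.2 j.2)

private lemma sum_fin_zmod [NeZero p] {M : Type*} [AddCommMonoid M] (f : ZMod p → M) :
    ∑ i : Fin p, f ((i : ℕ) : ZMod p) = ∑ z : ZMod p, f z :=
  Fintype.sum_bijective _ castFinBij _ _ (fun _ => rfl)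

private lemma mul_ind (P Q : Prop) [Decidable P] [Decidable Q] :
    (if P then (1 : ZMod 2) else 0) * (if Q then 1 else 0) = if P ∧ Q then 1 else 0 := by
  by_cases hP : P <;> by_cases hQ : Q <;> simp [hP, hQ]

private lemma sum_indicator_one [NeZero p] {f : ZMod p → ZMod p}
    (hf : Function.Bijective f) (c : ZMod p) :
    ∑ i : Fin p, (if f (((i : ℕ)) : ZMod p) = c then (1 : ZMod 2) else 0) = 1 := by
  rw [sum_fin_zmod (fun z => if f z = c then (1 : ZMod 2) else 0)]
  obtain ⟨z₀, hz₀⟩ := hf.surjective c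
  have h : ∀ z : ZMod p, (f z = c) ↔ (z = z₀) := fun z =>
    ⟨fun h => hf.injective (h.trans hz₀.symm), fun h => h ▸ hz₀⟩
  simp [h]

private lemma zzInnerSum [NeZero p] (C₁ D₁ C₂ D₂ : ZMod p) :
    (∑ i : Fin p, ∑ j : Fin p,
      (if ((i : ℕ) : ZMod p) = C₁ ∧ ((j : ℕ) : ZMod p) = D₁ then (1 : ZMod 2) else 0) *
      (if ((i : ℕ) : ZMod p) = C₂ ∧ ((j : ℕ) : ZMod p) = D₂ then (1 : ZMod 2) else 0))
    = if C₁ = C₂ ∧ D₁ = D₂ then 1 else 0 := by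
  rw [sum_fin_zmod (fun z => ∑ j : Fin p,
      (if z = C₁ ∧ ((j : ℕ) : ZMod p) = D₁ then (1 : ZMod 2) else 0) *
      (if z = C₂ ∧ ((j : ℕ) : ZMod p) = D₂ then (1 : ZMod 2) else 0))]
  have h : ∀ z : ZMod p, (∑ j : Fin p,
      (if z = C₁ ∧ ((j : ℕ) : ZMod p) = D₁ then (1 : ZMod 2) else 0) *
      (if z = C₂ ∧ ((j : ℕ) : ZMod p) = D₂ then (1 : ZMod 2) else 0))
      = ∑ u : ZMod p,
      (if z = C₁ ∧ u = D₁ then (1 : ZMod 2) else 0) *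
      (if z = C₂ ∧ u = D₂ then (1 : ZMod 2) else 0) := fun z =>
    sum_fin_zmod (fun u => (if z = C₁ ∧ u = D₁ then (1 : ZMod 2) else 0) *
      (if z = C₂ ∧ u = D₂ then (1 : ZMod 2) else 0))
  simp only [h, mul_ind]
  by_cases hC : C₁ = C₂
  · by_cases hD : D₁ = D₂
    · subst hC; subst hD
      rw [if_pos ⟨rfl, rfl⟩]
      simp [and_self, ite_and, Finset.sum_ite_eq']
      have h1 := sum_indicator_one (p := p) (f := fun z => z) Function.bijective_id D₁
      rwa [Finset.sum_boole] at h1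
    · rw [if_neg (by tauto)]
      refine Finset.sum_eq_zero fun z _ => Finset.sum_eq_zero fun u _ => ?_
      rw [if_neg]
      rintro ⟨⟨rfl, rfl⟩, h₁, h₂⟩
      exact hD h₂
  · rw [if_neg (by tauto)]
    refine Finset.sum_eq_zero fun z _ => Finset.sum_eq_zero fun u _ => ?_
    rw [if_neg]
    rintro ⟨⟨rfl, rfl⟩, h₁, h₂⟩
    exact hC h₁

/-- Splitting `Fin N` (with `N = m * n`) as `Fin m × Fin n` via `(a, i) ↦ n * a + i`. -/
def splitEquiv (m n N : ℕ) (hn : 0 < n) (hN : N = m * n) : Fin m × Fin n ≃ Fin N where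
  toFun q := ⟨n * q.1 + q.2, by
    subst hN
    have h1 : (q.1 : ℕ) + 1 ≤ m := q.1.2
    have h2 : (q.2 : ℕ) < n := q.2.2
    calc n * q.1 + q.2 < n * q.1 + n := by omega
      _ = n * ((q.1 : ℕ) + 1) := by ring
      _ ≤ n * m := Nat.mul_le_mul_left n h1
      _ = m * n := Nat.mul_comm n m⟩
  invFun x := (⟨(x : ℕ) / n, by
      subst hN
      exact (Nat.div_lt_iff_lt_mul hn).mpr x.2⟩,
    ⟨(x : ℕ) % n, Nat.mod_lt _ hn⟩)
  left_inv q := by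
    ext
    · show (n * q.1 + q.2) / n = q.1
      rw [Nat.mul_add_div hn, Nat.div_eq_of_lt q.2.2, Nat.add_zero]
    · show (n * q.1 + q.2) % n = q.2
      rw [Nat.mul_add_mod, Nat.mod_eq_of_lt q.2.2]
  right_inv x := by
    ext
    show n * ((x : ℕ) / n) + (x : ℕ) % n = (x : ℕ)
    exact Nat.div_add_mod _ _

lemma splitEquiv_val (m n N : ℕ) (hn : 0 < n) (hN : N = m * n) (q : Fin m × Fin n) :
    ((splitEquiv m n N hn hN q : Fin N) : ℕ) = n * q.1 + q.2 := rfl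

lemma splitEquiv_div (m n N : ℕ) (hn : 0 < n) (hN : N = m * n) (q : Fin m × Fin n) :
    ((splitEquiv m n N hn hN q : Fin N) : ℕ) / n = q.1 := by
  rw [splitEquiv_val, Nat.mul_add_div hn, Nat.div_eq_of_lt q.2.2, Nat.add_zero]

lemma splitEquiv_cast (m N : ℕ) (hp : 0 < p) (hN : N = m * p) (q : Fin m × Fin p) :
    (((splitEquiv m p N hp hN q : Fin N) : ℕ) : ZMod p) = ((q.2 : ℕ) : ZMod p) := by
  rw [splitEquiv_val]
  push_cast
  simp

private lemma reduce_lemma [NeZero p] (F₁ F₂ : ZMod p → ZMod p → ZMod p)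
    (G₁ G₂ : ZMod p → ZMod p) :
    (∑ a : Fin p, ∑ i : Fin p, ∑ b : Fin p, ∑ j : Fin p,
      (if ((i : ℕ) : ZMod p) = F₁ ((a : ℕ) : ZMod p) ((b : ℕ) : ZMod p) ∧
          ((j : ℕ) : ZMod p) = G₁ ((a : ℕ) : ZMod p) then (1 : ZMod 2) else 0) *
      (if ((i : ℕ) : ZMod p) = F₂ ((a : ℕ) : ZMod p) ((b : ℕ) : ZMod p) ∧
          ((j : ℕ) : ZMod p) = G₂ ((a : ℕ) : ZMod p) then (1 : ZMod 2) else 0))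
    = ∑ a : Fin p, ∑ b : Fin p,
        if F₁ ((a : ℕ) : ZMod p) ((b : ℕ) : ZMod p) = F₂ ((a : ℕ) : ZMod p) ((b : ℕ) : ZMod p) ∧
            G₁ ((a : ℕ) : ZMod p) = G₂ ((a : ℕ) : ZMod p) then 1 else 0 := by
  refine Finset.sum_congr rfl fun a _ => ?_
  rw [Finset.sum_comm]
  refine Finset.sum_congr rfl fun b _ => ?_
  exact zzInnerSum _ _ _ _

private lemma case3_count [NeZero p] [Fact p.Prime]
    {φ ψ : ZMod p → ZMod p} (hφ : Function.Bijective φ) (hψ : Function.Bijective ψ)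
    (L₁ Z₁ M₁ L₂ Z₂ M₂ : ZMod p) (hM : M₁ - M₂ ≠ 0) :
    (∑ a : Fin p, ∑ b : Fin p,
      if (L₁ + Z₁ + M₁ * (φ ((a : ℕ) : ZMod p) + ψ ((b : ℕ) : ZMod p)) =
            L₂ + Z₂ + M₂ * (φ ((a : ℕ) : ZMod p) + ψ ((b : ℕ) : ZMod p)) ∧
          L₁ + M₁ * φ ((a : ℕ) : ZMod p) = L₂ + M₂ * φ ((a : ℕ) : ZMod p))
      then (1 : ZMod 2) else 0) = 1 := by
  have hinv : (M₁ - M₂)⁻¹ * (M₁ - M₂) = 1 := inv_mul_cancel₀ hM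
  have hiff : ∀ U V : ZMod p,
      ((L₁ + Z₁ + M₁ * (U + V) = L₂ + Z₂ + M₂ * (U + V)) ∧
        (L₁ + M₁ * U = L₂ + M₂ * U)) ↔
      (U = (M₁ - M₂)⁻¹ * (L₂ - L₁) ∧
        V = (M₁ - M₂)⁻¹ * ((L₂ + Z₂) - (L₁ + Z₁)) - (M₁ - M₂)⁻¹ * (L₂ - L₁)) := by
    intro U V
    constructor
    · rintro ⟨h1, h2⟩
      constructor
      · linear_combination (M₁ - M₂)⁻¹ * h2 - U * hinv
      · linear_combination (M₁ - M₂)⁻¹ * h1 - (M₁ - M₂)⁻¹ * h2 - V * hinv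
    · rintro ⟨hU, hV⟩
      subst hU; subst hV
      constructor
      · linear_combination ((L₂ + Z₂) - (L₁ + Z₁)) * hinv
      · linear_combination (L₂ - L₁) * hinv
  have hterm : ∀ (a b : Fin p),
      (if (L₁ + Z₁ + M₁ * (φ ((a : ℕ) : ZMod p) + ψ ((b : ℕ) : ZMod p)) =
            L₂ + Z₂ + M₂ * (φ ((a : ℕ) : ZMod p) + ψ ((b : ℕ) : ZMod p)) ∧
          L₁ + M₁ * φ ((a : ℕ) : ZMod p) = L₂ + M₂ * φ ((a : ℕ) : ZMod p))
      then (1 : ZMod 2) else 0)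
      = (if φ ((a : ℕ) : ZMod p) = (M₁ - M₂)⁻¹ * (L₂ - L₁) then (1 : ZMod 2) else 0) *
        (if ψ ((b : ℕ) : ZMod p) =
            (M₁ - M₂)⁻¹ * ((L₂ + Z₂) - (L₁ + Z₁)) - (M₁ - M₂)⁻¹ * (L₂ - L₁)
          then (1 : ZMod 2) else 0) := by
    intro a b
    rw [mul_ind, if_congr (hiff _ _) rfl rfl]
  calc (∑ a : Fin p, ∑ b : Fin p,
      if (L₁ + Z₁ + M₁ * (φ ((a : ℕ) : ZMod p) + ψ ((b : ℕ) : ZMod p)) =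
            L₂ + Z₂ + M₂ * (φ ((a : ℕ) : ZMod p) + ψ ((b : ℕ) : ZMod p)) ∧
          L₁ + M₁ * φ ((a : ℕ) : ZMod p) = L₂ + M₂ * φ ((a : ℕ) : ZMod p))
      then (1 : ZMod 2) else 0)
      = (∑ a : Fin p,
          (if φ ((a : ℕ) : ZMod p) = (M₁ - M₂)⁻¹ * (L₂ - L₁) then (1 : ZMod 2) else 0)) *
        (∑ b : Fin p,
          (if ψ ((b : ℕ) : ZMod p) =
              (M₁ - M₂)⁻¹ * ((L₂ + Z₂) - (L₁ + Z₁)) - (M₁ - M₂)⁻¹ * (L₂ - L₁)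
            then (1 : ZMod 2) else 0)) := by
        rw [Finset.sum_mul_sum]
        exact Finset.sum_congr rfl fun a _ => Finset.sum_congr rfl fun b _ => hterm a b
    _ = 1 := by rw [sum_indicator_one hφ, sum_indicator_one hψ, one_mul]

end Aux

section Gram

variable {p w : ℕ}

/-- The Gram matrix entries. -/
lemma gram_entry (hp : p.Prime) (hodd : Odd p) (hw1 : 1 ≤ w) (hwp : w ≤ p)
    (φ ψ : ZMod p → ZMod p) (hφ : Function.Bijective φ) (hψ : Function.Bijective ψ)
    (ζ : ℕ → ZMod p → ZMod p) (hζ : ∀ m < w, Function.Bijective (ζ m))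
    (ℓ₁ ℓ₂ : Fin (w * p ^ 2)) :
    (Hmat p w φ ψ ζ * (Hmat p w φ ψ ζ)ᵀ) ℓ₁ ℓ₂ =
      if ℓ₁ = ℓ₂ then 1
      else if (ℓ₁ : ℕ) / p ^ 2 ≠ (ℓ₂ : ℕ) / p ^ 2 then 1 else 0 := by
  haveI : Fact p.Prime := ⟨hp⟩
  haveI : NeZero p := ⟨hp.pos.ne'⟩
  have hp0 : 0 < p := hp.pos
  have hpp : p ^ 2 = p * p := pow_two p
  have main : (Hmat p w φ ψ ζ * (Hmat p w φ ψ ζ)ᵀ) ℓ₁ ℓ₂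
      = ∑ a : Fin p, ∑ b : Fin p,
          if (((ℓ₁ : ℕ) : ZMod p) + ζ ((ℓ₁ : ℕ) / p ^ 2) (((ℓ₁ : ℕ) / p : ℕ) : ZMod p) +
                (((ℓ₁ : ℕ) / p ^ 2 : ℕ) : ZMod p) *
                  (φ ((a : ℕ) : ZMod p) + ψ ((b : ℕ) : ZMod p)) =
              ((ℓ₂ : ℕ) : ZMod p) + ζ ((ℓ₂ : ℕ) / p ^ 2) (((ℓ₂ : ℕ) / p : ℕ) : ZMod p) +
                (((ℓ₂ : ℕ) / p ^ 2 : ℕ) : ZMod p) *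
                  (φ ((a : ℕ) : ZMod p) + ψ ((b : ℕ) : ZMod p)) ∧
              ((ℓ₁ : ℕ) : ZMod p) +
                  (((ℓ₁ : ℕ) / p ^ 2 : ℕ) : ZMod p) * φ ((a : ℕ) : ZMod p) =
                ((ℓ₂ : ℕ) : ZMod p) +
                  (((ℓ₂ : ℕ) / p ^ 2 : ℕ) : ZMod p) * φ ((a : ℕ) : ZMod p))
          then (1 : ZMod 2) else 0 := by
    set P : Fin p × Fin p ≃ Fin (p ^ 2) := splitEquiv p p (p ^ 2) hp0 hpp with hP
    rw [Matrix.mul_apply]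
    rw [← Equiv.sum_comp (P.prodCongr P)
      (fun xy => Hmat p w φ ψ ζ ℓ₁ xy * (Hmat p w φ ψ ζ)ᵀ xy ℓ₂)]
    have step : ∀ q : (Fin p × Fin p) × (Fin p × Fin p),
        Hmat p w φ ψ ζ ℓ₁ ((P.prodCongr P) q) * (Hmat p w φ ψ ζ)ᵀ ((P.prodCongr P) q) ℓ₂
        = (if ((q.1.2 : ℕ) : ZMod p) =
              ((ℓ₁ : ℕ) : ZMod p) + ζ ((ℓ₁ : ℕ) / p ^ 2) (((ℓ₁ : ℕ) / p : ℕ) : ZMod p) +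
                (((ℓ₁ : ℕ) / p ^ 2 : ℕ) : ZMod p) *
                  (φ ((q.1.1 : ℕ) : ZMod p) + ψ ((q.2.1 : ℕ) : ZMod p)) ∧
            ((q.2.2 : ℕ) : ZMod p) =
              ((ℓ₁ : ℕ) : ZMod p) +
                (((ℓ₁ : ℕ) / p ^ 2 : ℕ) : ZMod p) * φ ((q.1.1 : ℕ) : ZMod p)
            then (1 : ZMod 2) else 0) *
          (if ((q.1.2 : ℕ) : ZMod p) =
              ((ℓ₂ : ℕ) : ZMod p) + ζ ((ℓ₂ : ℕ) / p ^ 2) (((ℓ₂ : ℕ) / p : ℕ) : ZMod p) +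
                (((ℓ₂ : ℕ) / p ^ 2 : ℕ) : ZMod p) *
                  (φ ((q.1.1 : ℕ) : ZMod p) + ψ ((q.2.1 : ℕ) : ZMod p)) ∧
            ((q.2.2 : ℕ) : ZMod p) =
              ((ℓ₂ : ℕ) : ZMod p) +
                (((ℓ₂ : ℕ) / p ^ 2 : ℕ) : ZMod p) * φ ((q.1.1 : ℕ) : ZMod p)
            then (1 : ZMod 2) else 0) := by
      rintro ⟨u, v⟩
      rw [Matrix.transpose_apply]
      show Hmat p w φ ψ ζ ℓ₁ (P u, P v) * Hmat p w φ ψ ζ ℓ₂ (P u, P v) = _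
      rw [Hmat, Hmat]
      simp only [hP]
      rw [splitEquiv_cast p (p ^ 2) hp0 hpp u, splitEquiv_cast p (p ^ 2) hp0 hpp v,
        splitEquiv_div p p (p ^ 2) hp0 hpp u, splitEquiv_div p p (p ^ 2) hp0 hpp v]
    simp only [step]
    have hred := reduce_lemma (p := p)
      (fun A B => ((ℓ₁ : ℕ) : ZMod p) + ζ ((ℓ₁ : ℕ) / p ^ 2) (((ℓ₁ : ℕ) / p : ℕ) : ZMod p) +
        (((ℓ₁ : ℕ) / p ^ 2 : ℕ) : ZMod p) * (φ A + ψ B))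
      (fun A B => ((ℓ₂ : ℕ) : ZMod p) + ζ ((ℓ₂ : ℕ) / p ^ 2) (((ℓ₂ : ℕ) / p : ℕ) : ZMod p) +
        (((ℓ₂ : ℕ) / p ^ 2 : ℕ) : ZMod p) * (φ A + ψ B))
      (fun A => ((ℓ₁ : ℕ) : ZMod p) + (((ℓ₁ : ℕ) / p ^ 2 : ℕ) : ZMod p) * φ A)
      (fun A => ((ℓ₂ : ℕ) : ZMod p) + (((ℓ₂ : ℕ) / p ^ 2 : ℕ) : ZMod p) * φ A)
    rw [Fintype.sum_prod_type]
    simp only [Fintype.sum_prod_type] at hred ⊢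
    exact hred
  rw [main]
  by_cases hl : ℓ₁ = ℓ₂
  · subst hl
    rw [if_pos rfl]
    have : ∀ a b : Fin p, (if (((ℓ₁ : ℕ) : ZMod p) +
          ζ ((ℓ₁ : ℕ) / p ^ 2) (((ℓ₁ : ℕ) / p : ℕ) : ZMod p) +
          (((ℓ₁ : ℕ) / p ^ 2 : ℕ) : ZMod p) * (φ ((a : ℕ) : ZMod p) + ψ ((b : ℕ) : ZMod p)) =
          ((ℓ₁ : ℕ) : ZMod p) + ζ ((ℓ₁ : ℕ) / p ^ 2) (((ℓ₁ : ℕ) / p : ℕ) : ZMod p) +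
          (((ℓ₁ : ℕ) / p ^ 2 : ℕ) : ZMod p) * (φ ((a : ℕ) : ZMod p) + ψ ((b : ℕ) : ZMod p)) ∧
          ((ℓ₁ : ℕ) : ZMod p) + (((ℓ₁ : ℕ) / p ^ 2 : ℕ) : ZMod p) * φ ((a : ℕ) : ZMod p) =
          ((ℓ₁ : ℕ) : ZMod p) + (((ℓ₁ : ℕ) / p ^ 2 : ℕ) : ZMod p) * φ ((a : ℕ) : ZMod p))
        then (1 : ZMod 2) else 0) = 1 := fun a b => if_pos ⟨rfl, rfl⟩
    simp only [this, Finset.sum_const, Finset.card_univ, Fintype.card_fin, nsmul_eq_mul,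
      mul_one]
    have hcast : ((p : ℕ) : ZMod 2) = 1 := by
      have h2 : p % 2 = 1 := Nat.odd_iff.mp hodd
      rw [← ZMod.natCast_mod p 2, h2, Nat.cast_one]
    rw [hcast]
    simp
  · rw [if_neg hl]
    have hm1w : (ℓ₁ : ℕ) / p ^ 2 < w := (Nat.div_lt_iff_lt_mul (pow_pos hp0 2)).mpr ℓ₁.2
    have hm2w : (ℓ₂ : ℕ) / p ^ 2 < w := (Nat.div_lt_iff_lt_mul (pow_pos hp0 2)).mpr ℓ₂.2
    by_cases hm : (ℓ₁ : ℕ) / p ^ 2 = (ℓ₂ : ℕ) / p ^ 2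
    · rw [if_neg (by simpa using hm)]
      refine Finset.sum_eq_zero fun a _ => Finset.sum_eq_zero fun b _ => ?_
      rw [if_neg]
      rintro ⟨h1, h2⟩
      apply hl
      rw [hm] at h1 h2
      have hL : ((ℓ₁ : ℕ) : ZMod p) = ((ℓ₂ : ℕ) : ZMod p) := add_right_cancel h2
      have hZ : ζ ((ℓ₂ : ℕ) / p ^ 2) (((ℓ₁ : ℕ) / p : ℕ) : ZMod p) =
          ζ ((ℓ₂ : ℕ) / p ^ 2) (((ℓ₂ : ℕ) / p : ℕ) : ZMod p) := by
        have h1' := add_right_cancel h1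
        rw [hL] at h1'
        exact add_left_cancel h1'
      have hmod : (ℓ₁ : ℕ) % p = (ℓ₂ : ℕ) % p :=
        (ZMod.natCast_eq_natCast_iff _ _ _).mp hL
      have hdivmod : ((ℓ₁ : ℕ) / p) % p = ((ℓ₂ : ℕ) / p) % p := by
        have hinj := (hζ _ (hm ▸ hm1w)).injective
        exact (ZMod.natCast_eq_natCast_iff _ _ _).mp (hinj hZ)
      have hdivdiv : (ℓ₁ : ℕ) / p / p = (ℓ₂ : ℕ) / p / p := by
        rw [Nat.div_div_eq_div_mul, Nat.div_div_eq_div_mul, ← pow_two, hm]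
      have hdiv : (ℓ₁ : ℕ) / p = (ℓ₂ : ℕ) / p := by
        conv_lhs => rw [← Nat.div_add_mod ((ℓ₁ : ℕ) / p) p]
        rw [hdivdiv, hdivmod, Nat.div_add_mod]
      refine Fin.ext ?_
      conv_lhs => rw [← Nat.div_add_mod (ℓ₁ : ℕ) p]
      rw [hdiv, hmod, Nat.div_add_mod]
    · rw [if_pos (by simpa using hm)]
      have hMne : (((ℓ₁ : ℕ) / p ^ 2 : ℕ) : ZMod p) - (((ℓ₂ : ℕ) / p ^ 2 : ℕ) : ZMod p) ≠ 0 := by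
        rw [sub_ne_zero]
        intro h
        apply hm
        have hmeq := (ZMod.natCast_eq_natCast_iff _ _ _).mp h
        exact Nat.ModEq.eq_of_lt_of_lt hmeq (lt_of_lt_of_le hm1w hwp)
          (lt_of_lt_of_le hm2w hwp)
      exact case3_count hφ hψ _ _ _ _ _ _ hMne
  done

end Gram

section Rank

variable (p w : ℕ)

/-- Block-constant extension map. -/
def blkMap (hp2 : 0 < p ^ 2) : (Fin w → ZMod 2) →ₗ[ZMod 2] (Fin (w * p ^ 2) → ZMod 2) where
  toFun c := fun ℓ => c ⟨(ℓ : ℕ) / p ^ 2, (Nat.div_lt_iff_lt_mul hp2).mpr ℓ.2⟩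
  map_add' := fun _ _ => rfl
  map_smul' := fun _ _ => rfl

/-- Summation functional. -/
def sumMap : (Fin w → ZMod 2) →ₗ[ZMod 2] ZMod 2 where
  toFun c := ∑ m, c m
  map_add' := fun x y => Finset.sum_add_distrib
  map_smul' := fun r x => by simp [Finset.mul_sum]

lemma rank_model (hp : p.Prime) (hodd : Odd p) (hw1 : 1 ≤ w) :
    (Matrix.of fun ℓ₁ ℓ₂ : Fin (w * p ^ 2) =>
      if ℓ₁ = ℓ₂ then (1 : ZMod 2)
      else if (ℓ₁ : ℕ) / p ^ 2 ≠ (ℓ₂ : ℕ) / p ^ 2 then 1 else 0).rank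
    = p ^ 2 + (w - 1) * (p ^ 2 - 1) := by
  have hp2 : 0 < p ^ 2 := pow_pos hp.pos 2
  have htwo : ∀ x : ZMod 2, x + x = 0 := by decide
  have hcast : ((p ^ 2 : ℕ) : ZMod 2) = 1 := by
    have h2 : p ^ 2 % 2 = 1 := Nat.odd_iff.mp (hodd.pow)
    rw [← ZMod.natCast_mod (p ^ 2) 2, h2, Nat.cast_one]
  set G : Matrix (Fin (w * p ^ 2)) (Fin (w * p ^ 2)) (ZMod 2) :=
    Matrix.of fun ℓ₁ ℓ₂ : Fin (w * p ^ 2) =>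
      if ℓ₁ = ℓ₂ then (1 : ZMod 2)
      else if (ℓ₁ : ℕ) / p ^ 2 ≠ (ℓ₂ : ℕ) / p ^ 2 then 1 else 0 with hG
  set E2 : Fin w × Fin (p ^ 2) ≃ Fin (w * p ^ 2) :=
    splitEquiv w (p ^ 2) (w * p ^ 2) hp2 rfl with hE2
  -- action of G on a vector
  have key : ∀ (v : Fin (w * p ^ 2) → ZMod 2) (ℓ : Fin (w * p ^ 2)),
      G.mulVec v ℓ = v ℓ + ∑ ℓ' : Fin (w * p ^ 2),
        (if (ℓ : ℕ) / p ^ 2 ≠ (ℓ' : ℕ) / p ^ 2 then v ℓ' else 0) := by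
    intro v ℓ
    have hterm : ∀ ℓ' : Fin (w * p ^ 2),
        G ℓ ℓ' * v ℓ' = (if ℓ' = ℓ then v ℓ' else 0) +
          (if (ℓ : ℕ) / p ^ 2 ≠ (ℓ' : ℕ) / p ^ 2 then v ℓ' else 0) := by
      intro ℓ'
      rw [hG]
      by_cases h : ℓ = ℓ'
      · subst h
        simp
      · have h' : ¬ (ℓ' = ℓ) := fun hh => h hh.symm
        simp only [Matrix.of_apply, if_neg h, if_neg h']
        split_ifs <;> simp
    rw [show G.mulVec v ℓ = ∑ ℓ' : Fin (w * p ^ 2), G ℓ ℓ' * v ℓ' from rfl]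
    rw [Finset.sum_congr rfl fun ℓ' _ => hterm ℓ', Finset.sum_add_distrib,
      Finset.sum_ite_eq' Finset.univ ℓ v]
    simp
  -- block sums of block-constant vectors
  have blocksum : ∀ (c : Fin w → ZMod 2) (m0 : ℕ) (hm0 : m0 < w),
      (∑ ℓ' : Fin (w * p ^ 2),
        (if m0 ≠ (ℓ' : ℕ) / p ^ 2 then blkMap p w hp2 c ℓ' else 0))
      = (∑ m, c m) + c ⟨m0, hm0⟩ := by
    intro c m0 hm0
    rw [← Equiv.sum_comp E2
      (fun ℓ' => if m0 ≠ (ℓ' : ℕ) / p ^ 2 then blkMap p w hp2 c ℓ' else 0)]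
    rw [Fintype.sum_prod_type]
    have hterm : ∀ (m : Fin w) (r : Fin (p ^ 2)),
        (if m0 ≠ ((E2 (m, r) : Fin (w * p ^ 2)) : ℕ) / p ^ 2
          then blkMap p w hp2 c (E2 (m, r)) else 0)
        = if m0 ≠ (m : ℕ) then c m else 0 := by
      intro m r
      have hdiv : ((E2 (m, r) : Fin (w * p ^ 2)) : ℕ) / p ^ 2 = (m : ℕ) :=
        splitEquiv_div w (p ^ 2) (w * p ^ 2) hp2 rfl (m, r)
      have hval : blkMap p w hp2 c (E2 (m, r)) = c m := by
        show c ⟨((E2 (m, r) : Fin (w * p ^ 2)) : ℕ) / p ^ 2, _⟩ = c m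
        congr 1
        exact Fin.ext hdiv
      rw [hdiv, hval]
    rw [Finset.sum_congr rfl fun m _ => Finset.sum_congr rfl fun r _ => hterm m r]
    have hconst : ∀ m : Fin w,
        (∑ _r : Fin (p ^ 2), (if m0 ≠ (m : ℕ) then c m else 0))
        = if m0 ≠ (m : ℕ) then c m else 0 := by
      intro m
      rw [Finset.sum_const, Finset.card_univ, Fintype.card_fin, nsmul_eq_mul, hcast, one_mul]
    rw [Finset.sum_congr rfl fun m _ => hconst m]
    have hsplit : ∀ m : Fin w,
        (if m0 ≠ (m : ℕ) then c m else 0) = c m + (if m = ⟨m0, hm0⟩ then c m else 0) := by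
      intro m
      by_cases h : m = ⟨m0, hm0⟩
      · subst h
        simp [htwo]
      · have h' : m0 ≠ (m : ℕ) := fun hh => h (Fin.ext hh.symm)
        simp [h, h']
    rw [Finset.sum_congr rfl fun m _ => hsplit m, Finset.sum_add_distrib,
      Finset.sum_ite_eq' Finset.univ (⟨m0, hm0⟩ : Fin w) c]
    simp
  -- kernel description
  have hker : LinearMap.ker G.mulVecLin =
      Submodule.map (blkMap p w hp2) (LinearMap.ker (sumMap w)) := by
    ext v
    simp only [LinearMap.mem_ker, Submodule.mem_map]
    constructor
    · intro hv
      have hv' : ∀ ℓ, v ℓ + ∑ ℓ' : Fin (w * p ^ 2),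
          (if (ℓ : ℕ) / p ^ 2 ≠ (ℓ' : ℕ) / p ^ 2 then v ℓ' else 0) = 0 := by
        intro ℓ
        rw [← key v ℓ, ← Matrix.mulVecLin_apply, hv]
        rfl
      set c : Fin w → ZMod 2 := fun m => ∑ ℓ' : Fin (w * p ^ 2),
        (if (m : ℕ) ≠ (ℓ' : ℕ) / p ^ 2 then v ℓ' else 0) with hc
      have hbc : blkMap p w hp2 c = v := by
        funext ℓ
        show (∑ ℓ' : Fin (w * p ^ 2),
          (if (ℓ : ℕ) / p ^ 2 ≠ (ℓ' : ℕ) / p ^ 2 then v ℓ' else 0)) = v ℓ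
        have h0 := hv' ℓ
        calc (∑ ℓ' : Fin (w * p ^ 2),
            (if (ℓ : ℕ) / p ^ 2 ≠ (ℓ' : ℕ) / p ^ 2 then v ℓ' else 0))
            = v ℓ + (v ℓ + ∑ ℓ' : Fin (w * p ^ 2),
                (if (ℓ : ℕ) / p ^ 2 ≠ (ℓ' : ℕ) / p ^ 2 then v ℓ' else 0)) := by
              rw [← add_assoc, htwo, zero_add]
          _ = v ℓ + 0 := by rw [h0]
          _ = v ℓ := add_zero _
      refine ⟨c, ?_, hbc⟩
      show (∑ m, c m) = 0
      have hN : 0 < w * p ^ 2 := Nat.mul_pos hw1 hp2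
      have hlt : ((⟨0, hN⟩ : Fin (w * p ^ 2)) : ℕ) / p ^ 2 < w :=
        (Nat.div_lt_iff_lt_mul hp2).mpr (⟨0, hN⟩ : Fin (w * p ^ 2)).2
      have h0 := hv' ⟨0, hN⟩
      rw [← hbc] at h0
      rw [blocksum c (((⟨0, hN⟩ : Fin (w * p ^ 2)) : ℕ) / p ^ 2) hlt] at h0
      have h0' : c ⟨((⟨0, hN⟩ : Fin (w * p ^ 2)) : ℕ) / p ^ 2, hlt⟩ +
          ((∑ m, c m) + c ⟨((⟨0, hN⟩ : Fin (w * p ^ 2)) : ℕ) / p ^ 2, hlt⟩) = 0 := h0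
      have h2 := htwo (c ⟨((⟨0, hN⟩ : Fin (w * p ^ 2)) : ℕ) / p ^ 2, hlt⟩)
      linear_combination h0' - h2
    · rintro ⟨c, hc0, rfl⟩
      funext ℓ
      show G.mulVec (blkMap p w hp2 c) ℓ = 0
      rw [key, blocksum c ((ℓ : ℕ) / p ^ 2) ((Nat.div_lt_iff_lt_mul hp2).mpr ℓ.2)]
      have hS : (∑ m, c m) = 0 := hc0
      rw [hS, zero_add]
      exact htwo _
  -- injectivity of blkMap
  have hinj : Function.Injective (blkMap p w hp2) := by
    intro c c' h
    funext m
    have hdiv : ((E2 (m, ⟨0, hp2⟩) : Fin (w * p ^ 2)) : ℕ) / p ^ 2 = (m : ℕ) :=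
      splitEquiv_div w (p ^ 2) (w * p ^ 2) hp2 rfl (m, ⟨0, hp2⟩)
    have key2 : c ⟨((E2 (m, ⟨0, hp2⟩) : Fin (w * p ^ 2)) : ℕ) / p ^ 2,
        (Nat.div_lt_iff_lt_mul hp2).mpr (E2 (m, ⟨0, hp2⟩) : Fin (w * p ^ 2)).2⟩ =
        c' ⟨((E2 (m, ⟨0, hp2⟩) : Fin (w * p ^ 2)) : ℕ) / p ^ 2,
        (Nat.div_lt_iff_lt_mul hp2).mpr (E2 (m, ⟨0, hp2⟩) : Fin (w * p ^ 2)).2⟩ :=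
      congrFun h (E2 (m, ⟨0, hp2⟩))
    have hidx : (⟨((E2 (m, ⟨0, hp2⟩) : Fin (w * p ^ 2)) : ℕ) / p ^ 2,
        (Nat.div_lt_iff_lt_mul hp2).mpr (E2 (m, ⟨0, hp2⟩) : Fin (w * p ^ 2)).2⟩ : Fin w) = m :=
      Fin.ext hdiv
    rw [hidx] at key2
    exact key2
  -- finrank of the kernel of the sum functional
  have hfin1 : Module.finrank (ZMod 2) (LinearMap.ker (sumMap w)) = w - 1 := by
    have hsurj : Function.Surjective (sumMap w) := by
      intro x
      refine ⟨fun m => if m = ⟨0, hw1⟩ then x else 0, ?_⟩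
      show (∑ m : Fin w, if m = (⟨0, hw1⟩ : Fin w) then x else 0) = x
      rw [Finset.sum_ite_eq' Finset.univ (⟨0, hw1⟩ : Fin w) (fun _ => x)]
      simp
    have hrn := LinearMap.finrank_range_add_finrank_ker (sumMap w)
    rw [LinearMap.range_eq_top.mpr hsurj, finrank_top, Module.finrank_self,
      Module.finrank_pi, Fintype.card_fin] at hrn
    omega
  have hkerfin : Module.finrank (ZMod 2) (LinearMap.ker G.mulVecLin) = w - 1 := by
    rw [hker,
      ← LinearEquiv.finrank_eq (Submodule.equivMapOfInjective (blkMap p w hp2) hinj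
        (LinearMap.ker (sumMap w)))]
    exact hfin1
  have hrn := LinearMap.finrank_range_add_finrank_ker G.mulVecLin
  rw [hkerfin, Module.finrank_pi, Fintype.card_fin] at hrn
  have harith : (p ^ 2 + (w - 1) * (p ^ 2 - 1)) + (w - 1) = w * p ^ 2 := by
    obtain ⟨w', rfl⟩ : ∃ w', w = w' + 1 := ⟨w - 1, by omega⟩
    simp only [Nat.add_sub_cancel]
    have hq : 1 ≤ p ^ 2 := hp2
    calc p ^ 2 + w' * (p ^ 2 - 1) + w'
        = p ^ 2 + (w' * (p ^ 2 - 1) + w' * 1) := by ring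
      _ = p ^ 2 + w' * (p ^ 2 - 1 + 1) := by rw [← Nat.mul_add]
      _ = p ^ 2 + w' * p ^ 2 := by rw [Nat.sub_add_cancel hq]
      _ = (w' + 1) * p ^ 2 := by ring
  have hrank : G.rank = Module.finrank (ZMod 2) (LinearMap.range G.mulVecLin) := rfl
  have h1 : G.rank + (w - 1) = w * p ^ 2 := by rw [hrank]; exact hrn
  exact Nat.add_right_cancel (h1.trans harith.symm)

end Rank

/-- Theorem 7 (second family of 2-D EA quantum LDPC codes): the Gram matrix
`G = H · Hᵀ` over GF(2) has entry `1` on the diagonal, entry `1` between distinct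
layers from different horizontal block-layers, entry `0` between distinct layers from
the same horizontal block-layer, and `rank G = p² + (w−1)(p²−1)`; hence the EA quantum
LDPC code built from the single classical code `H` needs `p² + (w−1)(p²−1)` ebits. -/
theorem stmt_15 (p w : ℕ) (hp : p.Prime) (hodd : Odd p) (hw1 : 1 ≤ w) (hwp : w ≤ p)
    (φ ψ : ZMod p → ZMod p) (hφ : Function.Bijective φ) (hψ : Function.Bijective ψ)
    (ζ : ℕ → ZMod p → ZMod p) (hζ : ∀ m < w, Function.Bijective (ζ m)) :
    (∀ ℓ₁ ℓ₂ : Fin (w * p ^ 2),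
        (Hmat p w φ ψ ζ * (Hmat p w φ ψ ζ)ᵀ) ℓ₁ ℓ₂ =
          if ℓ₁ = ℓ₂ then 1
          else if (ℓ₁ : ℕ) / p ^ 2 ≠ (ℓ₂ : ℕ) / p ^ 2 then 1 else 0) ∧
    (Hmat p w φ ψ ζ * (Hmat p w φ ψ ζ)ᵀ).rank = p ^ 2 + (w - 1) * (p ^ 2 - 1) := by
  have hGeq : Hmat p w φ ψ ζ * (Hmat p w φ ψ ζ)ᵀ =
      Matrix.of fun ℓ₁ ℓ₂ : Fin (w * p ^ 2) =>
        if ℓ₁ = ℓ₂ then (1 : ZMod 2)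
        else if (ℓ₁ : ℕ) / p ^ 2 ≠ (ℓ₂ : ℕ) / p ^ 2 then 1 else 0 := by
    ext ℓ₁ ℓ₂
    exact gram_entry hp hodd hw1 hwp φ ψ hφ hψ ζ hζ ℓ₁ ℓ₂
  refine ⟨fun ℓ₁ ℓ₂ => gram_entry hp hodd hw1 hwp φ ψ hφ hψ ζ hζ ℓ₁ ℓ₂, ?_⟩
  rw [hGeq, rank_model p w hp hodd hw1]
end
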